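/- arXiv:2202.02943 — 7 statements merged into one kernel-verified Lean document; each statement's English description precedes it below -/
import Mathlib

section
/- Let P₀ and P₁ be two Borel probability measures on ℝ^m, and define the sigmoid IPM d_sig(P₀,P₁) = sup over θ ∈ ℝ^m and μ ∈ ℝ of |∫ σ(θᵀz + μ) dP₀(z) − ∫ σ(θᵀz + μ) dP₁(z)|, where σ(t) = 1/(1 + e^{−t}). Then d_sig(P₀,P₁) = 0 if and only if P₀ = P₁. -/
open MeasureTheory

/-- The sigmoid function `σ(t) = 1/(1 + e^{-t})`. -/
noncomputable def sigmoid (t : ℝ) : ℝ := 1 / (1 + Real.exp (-t))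

/-- The sigmoid IPM between two measures on `ℝ^m`:
`d_sig(P₀,P₁) = sup_{θ ∈ ℝ^m, μ ∈ ℝ} |∫ σ(θᵀz + μ) dP₀ - ∫ σ(θᵀz + μ) dP₁|`. -/
noncomputable def sigmoidIPM {m : ℕ} (P₀ P₁ : Measure (Fin m → ℝ)) : ℝ :=
  ⨆ p : (Fin m → ℝ) × ℝ,
    |(∫ z, sigmoid ((∑ i, p.1 i * z i) + p.2) ∂P₀) -
      ∫ z, sigmoid ((∑ i, p.1 i * z i) + p.2) ∂P₁|

/-!
A measure on `ℝ` is determined by the integrals of `σ(s x + c)`: the functions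
`x ↦ σ(n (n (t - x) + 1))` are bounded by `1` and converge pointwise to the indicator of `Iic t`,
so dominated convergence recovers the distribution function. In higher dimension the
characteristic function, hence the measure, is determined by the one-dimensional images under
continuous linear functionals (Cramér–Wold), and `σ(s L z + c) = σ((s • L) z + c)` reduces to
the one-dimensional case.
-/

open Filter Set Topology

lemma sigmoid_eq_real_sigmoid : sigmoid = Real.sigmoid := by
  funext t
  simp only [sigmoid, Real.sigmoid_def, one_div]

lemma tendsto_sigmoid_indicator_Iic (t x : ℝ) :
    Tendsto (fun n : ℕ => Real.sigmoid (n * (n * (t - x) + 1))) atTop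
      (𝓝 ((Iic t).indicator 1 x)) := by
  have hn : Tendsto (fun n : ℕ => (n : ℝ)) atTop atTop := tendsto_natCast_atTop_atTop
  by_cases hx : x ≤ t
  · rw [indicator_of_mem (mem_Iic.mpr hx), Pi.one_apply]
    refine Real.tendsto_sigmoid_atTop.comp (tendsto_atTop_mono (fun n => ?_) hn)
    nlinarith [mul_nonneg (n.cast_nonneg : (0 : ℝ) ≤ n) (sub_nonneg.mpr hx)]
  · rw [indicator_of_notMem (by simpa using hx)]
    refine Real.tendsto_sigmoid_atBot.comp (hn.atTop_mul_atBot₀ ?_)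
    exact tendsto_atBot_add_const_right _ _ (hn.atTop_mul_const_of_neg (by linarith))

lemma tendsto_integral_sigmoid_measureReal_Iic (μ : Measure ℝ) [IsFiniteMeasure μ] (t : ℝ) :
    Tendsto (fun n : ℕ => ∫ x, Real.sigmoid (n * (n * (t - x) + 1)) ∂μ) atTop
      (𝓝 (μ.real (Iic t))) := by
  rw [← integral_indicator_one measurableSet_Iic]
  refine tendsto_integral_of_dominated_convergence (fun _ => 1) (fun n => ?_)
    (integrable_const 1) (fun n => ae_of_all _ fun x => ?_)
    (ae_of_all _ (tendsto_sigmoid_indicator_Iic t))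
  · exact (continuous_sigmoid.comp (by fun_prop)).aestronglyMeasurable
  · rw [Real.norm_of_nonneg (Real.sigmoid_nonneg _)]
    exact Real.sigmoid_le_one _

namespace MeasureTheory.Measure

theorem ext_of_integral_sigmoid {μ ν : Measure ℝ} [IsFiniteMeasure μ] [IsFiniteMeasure ν]
    (h : ∀ s c : ℝ, ∫ x, Real.sigmoid (s * x + c) ∂μ = ∫ x, Real.sigmoid (s * x + c) ∂ν) :
    μ = ν := by
  refine Measure.ext_of_Iic μ ν fun t => ?_
  have haffine : ∀ (n : ℕ) (x : ℝ),
      (n : ℝ) * (n * (t - x) + 1) = -(n * n) * x + (n * n * t + n) := fun n x => by ring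
  have hμ := tendsto_integral_sigmoid_measureReal_Iic μ t
  have hν := tendsto_integral_sigmoid_measureReal_Iic ν t
  simp only [haffine, h] at hμ
  simp only [haffine] at hν
  rw [← measureReal_eq_measureReal_iff (measure_ne_top μ _) (measure_ne_top ν _)]
  exact tendsto_nhds_unique hμ hν

section Dual

variable {E : Type*} [NormedAddCommGroup E] [NormedSpace ℝ E] [CompleteSpace E]
  [SecondCountableTopology E] [MeasurableSpace E] [BorelSpace E]

theorem ext_of_map_strongDual {μ ν : Measure E} [IsFiniteMeasure μ] [IsFiniteMeasure ν]
    (h : ∀ L : StrongDual ℝ E, μ.map L = ν.map L) : μ = ν :=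
  ext_of_charFunDual <| funext fun L => by
    rw [charFunDual_eq_charFun_map_one, charFunDual_eq_charFun_map_one, h L]

theorem ext_of_integral_sigmoid_strongDual {μ ν : Measure E}
    [IsFiniteMeasure μ] [IsFiniteMeasure ν]
    (h : ∀ (L : StrongDual ℝ E) (c : ℝ),
      ∫ x, Real.sigmoid (L x + c) ∂μ = ∫ x, Real.sigmoid (L x + c) ∂ν) :
    μ = ν := by
  refine ext_of_map_strongDual fun L => ext_of_integral_sigmoid fun s c => ?_
  rw [integral_map L.continuous.aemeasurable (by fun_prop),
    integral_map L.continuous.aemeasurable (by fun_prop)]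
  exact h (s • L) c

end Dual

end MeasureTheory.Measure

section ProbabilityMeasure

variable {α : Type*} [MeasurableSpace α] {f : α → ℝ}

lemma integral_le_one_of_le_one (μ : Measure α) [IsProbabilityMeasure μ]
    (hf₀ : ∀ x, 0 ≤ f x) (hf₁ : ∀ x, f x ≤ 1) : ∫ x, f x ∂μ ≤ 1 := by
  simpa using integral_mono_of_nonneg (ae_of_all μ hf₀) (integrable_const 1) (ae_of_all μ hf₁)

lemma abs_integral_sub_integral_le_one (μ ν : Measure α) [IsProbabilityMeasure μ]
    [IsProbabilityMeasure ν] (hf₀ : ∀ x, 0 ≤ f x) (hf₁ : ∀ x, f x ≤ 1) :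
    |∫ x, f x ∂μ - ∫ x, f x ∂ν| ≤ 1 :=
  abs_sub_le_of_nonneg_of_le (integral_nonneg hf₀) (integral_le_one_of_le_one μ hf₀ hf₁)
    (integral_nonneg hf₀) (integral_le_one_of_le_one ν hf₀ hf₁)

end ProbabilityMeasure

lemma integral_sigmoid_eq_of_sigmoidIPM_eq_zero {m : ℕ} {P₀ P₁ : Measure (Fin m → ℝ)}
    [IsProbabilityMeasure P₀] [IsProbabilityMeasure P₁] (h : sigmoidIPM P₀ P₁ = 0)
    (θ : Fin m → ℝ) (c : ℝ) :
    ∫ z, sigmoid ((∑ i, θ i * z i) + c) ∂P₀ = ∫ z, sigmoid ((∑ i, θ i * z i) + c) ∂P₁ := by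
  have hle : |∫ z, sigmoid ((∑ i, θ i * z i) + c) ∂P₀ - ∫ z, sigmoid ((∑ i, θ i * z i) + c) ∂P₁|
      ≤ sigmoidIPM P₀ P₁ := by
    refine le_ciSup (f := fun p : (Fin m → ℝ) × ℝ =>
      |∫ z, sigmoid ((∑ i, p.1 i * z i) + p.2) ∂P₀ - ∫ z, sigmoid ((∑ i, p.1 i * z i) + p.2) ∂P₁|)
      ⟨1, forall_mem_range.2 fun _ => ?_⟩ (θ, c)
    exact abs_integral_sub_integral_le_one P₀ P₁
      (fun _ => sigmoid_eq_real_sigmoid ▸ Real.sigmoid_nonneg _)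
      (fun _ => sigmoid_eq_real_sigmoid ▸ Real.sigmoid_le_one _)
  rw [h] at hle
  exact sub_eq_zero.mp (abs_nonpos_iff.mp hle)

lemma StrongDual.apply_eq_sum_mul_single {m : ℕ} (L : StrongDual ℝ (Fin m → ℝ))
    (z : Fin m → ℝ) : L z = ∑ i, L (Pi.single i 1) * z i := by
  conv_lhs => rw [pi_eq_sum_univ' z]
  simp [mul_comm]

/-- the sigmoid IPM between two Borel probability measures on `ℝ^m`
vanishes if and only if the measures coincide. -/
theorem sigmoidIPM_eq_zero_iff {m : ℕ} (P₀ P₁ : Measure (Fin m → ℝ))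
    [IsProbabilityMeasure P₀] [IsProbabilityMeasure P₁] :
    sigmoidIPM P₀ P₁ = 0 ↔ P₀ = P₁ := by
  refine ⟨fun h => Measure.ext_of_integral_sigmoid_strongDual fun L c => ?_,
    fun h => by simp [sigmoidIPM, h]⟩
  simpa only [← StrongDual.apply_eq_sum_mul_single, sigmoid_eq_real_sigmoid] using
    integral_sigmoid_eq_of_sigmoidIPM_eq_zero h (fun i => L (Pi.single i 1)) c
end

section
/- Let r₁, r₂ ∈ ℕ, set r = r₁ + r₂, and let λᵢ = −1 + 2i/r for i = 0, 1, …, r. Then there exists a vector (β₀, β₁, …, β_r) ∈ ℝ^{r+1} such that Σ_{i=0}^{r} βᵢ (x + λᵢ y)^r = x^{r₁} y^{r₂} for all x, y ∈ ℝ, and Σ_{i=0}^{r} |βᵢ| < e^r. -/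
/-!
Let `Lᵢ` be the Lagrange basis polynomials for the `r + 1` nodes `λᵢ`. Interpolating `X ^ j`
(`j ≤ r`) exactly shows that the weights `wᵢ = coeff_{r₂} Lᵢ` satisfy `∑ᵢ wᵢ λᵢ ^ j = δ_{j r₂}`, so
by the binomial theorem `∑ᵢ wᵢ (x + λᵢ y) ^ r = (r choose r₂) x ^ r₁ y ^ r₂`; take
`βᵢ = wᵢ / (r choose r₂)`. Since `Lᵢ = ∏_{j ≠ i} (X - λⱼ) / ∏_{j ≠ i} (λᵢ - λⱼ)` with `|λⱼ| ≤ 1`,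
`|wᵢ| ≤ (r choose r₂) / ∏_{j ≠ i} |λᵢ - λⱼ| = (r choose r₂) (r/2) ^ r / (i! (r - i)!)`, hence
`∑ᵢ |βᵢ| ≤ (r/2) ^ r 2 ^ r / r! = r ^ r / r! < e ^ r`.
-/

open Polynomial Finset
open scoped Nat

theorem abs_coeff_prod_X_sub_C_le {ι : Type*} [DecidableEq ι] (s : Finset ι) (b : ι → ℝ)
    (hb : ∀ j ∈ s, |b j| ≤ 1) (k : ℕ) :
    |(∏ j ∈ s, (X - C (b j))).coeff k| ≤ ((#s).choose k : ℝ) := by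
  induction s using Finset.induction_on generalizing k with
  | empty => cases k <;> simp [coeff_one]
  | insert a s ha ih =>
    have ih := ih (fun j hj ↦ hb j (mem_insert_of_mem hj))
    have hba := hb a (mem_insert_self a s)
    rw [prod_insert ha, card_insert_of_notMem ha, mul_comm]
    set q := ∏ j ∈ s, (X - C (b j))
    cases k with
    | zero =>
      calc |(q * (X - C (b a))).coeff 0| = |q.coeff 0| * |b a| := by simp [abs_mul]
        _ ≤ (#s).choose 0 * 1 := by gcongr; exact ih 0
        _ = (#s + 1).choose 0 := by simp
    | succ k =>
      calc |(q * (X - C (b a))).coeff (k + 1)| ≤ |q.coeff k| + |q.coeff (k + 1)| * |b a| := by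
            rw [coeff_mul_X_sub_C, ← abs_mul]; exact abs_sub _ _
        _ ≤ (#s).choose k + (#s).choose (k + 1) * 1 := by gcongr <;> apply ih
        _ = (#s + 1).choose (k + 1) := by rw [mul_one, Nat.choose_succ_succ]; push_cast; ring

theorem Lagrange.basis_eq_C_mul_prod {F ι : Type*} [Field F] [DecidableEq ι] (s : Finset ι)
    (v : ι → F) (i : ι) :
    Lagrange.basis s v i = C (∏ j ∈ s.erase i, (v i - v j)⁻¹) * ∏ j ∈ s.erase i, (X - C (v j)) := by
  rw [Lagrange.basis, map_prod, ← prod_mul_distrib]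
  rfl

theorem Lagrange.abs_coeff_basis_le {ι : Type*} [DecidableEq ι] (s : Finset ι) (v : ι → ℝ)
    (hv : ∀ j ∈ s, |v j| ≤ 1) (i : ι) (k : ℕ) :
    |(Lagrange.basis s v i).coeff k| ≤ (#(s.erase i)).choose k / ∏ j ∈ s.erase i, |v i - v j| := by
  rw [basis_eq_C_mul_prod, coeff_C_mul, abs_mul, abs_prod, div_eq_inv_mul, ← prod_inv_distrib]
  simp only [abs_inv]
  gcongr
  exact abs_coeff_prod_X_sub_C_le _ _ (fun j hj ↦ hv j (mem_of_mem_erase hj)) k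

theorem Lagrange.sum_eval_mul_coeff_basis {F ι : Type*} [Field F] [DecidableEq ι] {s : Finset ι}
    {v : ι → F} (hvs : Set.InjOn v s) {p : F[X]} (hp : p.degree < #s) (k : ℕ) :
    ∑ i ∈ s, p.eval (v i) * (Lagrange.basis s v i).coeff k = p.coeff k := by
  conv_rhs => rw [eq_interpolate hvs hp]
  simp [interpolate_apply, coeff_C_mul]

theorem sum_mul_add_mul_pow_eq_of_moments {ι R : Type*} [CommSemiring R] (s : Finset ι)
    (w v : ι → R) {n m : ℕ} (hw : ∀ k ≤ n, ∑ i ∈ s, w i * v i ^ k = if k = m then 1 else 0)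
    (x y : R) :
    ∑ i ∈ s, w i * (x + v i * y) ^ n = n.choose m * x ^ (n - m) * y ^ m := by
  calc ∑ i ∈ s, w i * (x + v i * y) ^ n
      = ∑ k ∈ range (n + 1), (∑ i ∈ s, w i * v i ^ k) * (y ^ k * x ^ (n - k) * n.choose k) := by
        simp_rw [add_comm x, add_pow, mul_sum, sum_mul]
        rw [sum_comm]
        refine sum_congr rfl fun k _ ↦ sum_congr rfl fun i _ ↦ ?_
        ring
    _ = n.choose m * x ^ (n - m) * y ^ m := by
        rw [sum_congr rfl fun k hk ↦ by rw [hw k (mem_range_succ_iff.mp hk)]]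
        simp only [ite_mul, one_mul, zero_mul, sum_ite_eq', mem_range_succ_iff]
        split_ifs with hm
        · ring
        · simp [Nat.choose_eq_zero_of_lt (not_le.mp hm)]

theorem prod_erase_range_abs_sub (n : ℕ) {i : ℕ} (hi : i ≤ n) :
    ∏ j ∈ (range (n + 1)).erase i, |(i : ℝ) - j| = i ! * (n - i)! := by
  induction n, hi using Nat.le_induction with
  | base =>
    have hterm : ∀ j ∈ range i, |(i : ℝ) - j| = (i - j : ℕ) := fun j hj ↦ by
      have hji := (mem_range.mp hj).le
      rw [Nat.cast_sub hji, abs_of_nonneg (sub_nonneg.mpr (by exact_mod_cast hji))]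
    rw [range_add_one, erase_insert notMem_range_self, prod_congr rfl hterm, ← Nat.cast_prod,
      ← Nat.descFactorial_eq_prod_range, Nat.descFactorial_self, Nat.sub_self,
      Nat.factorial_zero, Nat.cast_one, mul_one]
  | succ n hin ih =>
    rw [range_add_one, erase_insert_of_ne (by omega), prod_insert (by simp), ih,
      Nat.sub_add_comm hin, Nat.factorial_succ, abs_sub_comm,
      abs_of_nonneg (by rw [sub_nonneg]; exact_mod_cast (by omega : i ≤ n + 1))]
    push_cast [hin]
    ring

theorem sum_range_inv_factorial_mul_factorial (n : ℕ) :
    ∑ i ∈ range (n + 1), ((i ! * (n - i)! : ℕ) : ℝ)⁻¹ = 2 ^ n / n ! := by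
  rw [show (2 : ℝ) ^ n = (2 ^ n : ℕ) by push_cast; rfl, ← Nat.sum_range_choose, Nat.cast_sum,
    sum_div]
  refine sum_congr rfl fun i hi ↦ ?_
  rw [Nat.cast_choose ℝ (mem_range_succ_iff.mp hi), Nat.cast_mul]
  field_simp

theorem Real.pow_div_factorial_lt_exp {x : ℝ} (hx : 0 < x) (n : ℕ) : x ^ n / n ! < Real.exp x :=
  calc x ^ n / n ! < x ^ n / n ! + x ^ (n + 1) / (n + 1)! := by
        have : 0 < x ^ (n + 1) / (n + 1)! := by positivity
        linarith
    _ ≤ ∑ k ∈ range (n + 2), x ^ k / k ! := by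
        rw [sum_range_succ, sum_range_succ]
        have : 0 ≤ ∑ k ∈ range n, x ^ k / k ! := sum_nonneg fun _ _ ↦ by positivity
        linarith
    _ ≤ Real.exp x := Real.sum_le_exp_of_nonneg hx.le _

noncomputable def equispacedNode (r i : ℕ) : ℝ := -1 + 2 * i / r

theorem abs_equispacedNode_le {r i : ℕ} (hi : i ≤ r) : |equispacedNode r i| ≤ 1 := by
  have h0 : 0 ≤ 2 * (i : ℝ) / r := by positivity
  have h2 : 2 * (i : ℝ) / r ≤ 2 :=
    div_le_of_le_mul₀ (Nat.cast_nonneg r) zero_le_two (by gcongr)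
  rw [equispacedNode, abs_le]
  constructor <;> linarith

theorem equispacedNode_sub (r i j : ℕ) :
    equispacedNode r i - equispacedNode r j = 2 / r * ((i : ℝ) - j) := by
  rw [equispacedNode, equispacedNode]
  ring

theorem injOn_equispacedNode (r : ℕ) : Set.InjOn (equispacedNode r) (range (r + 1)) := by
  intro i hi j hj hij
  rcases eq_or_ne r 0 with rfl | hr
  · simp_all
  · rw [← sub_eq_zero, equispacedNode_sub, mul_eq_zero, sub_eq_zero] at hij
    simpa [hr] using hij

theorem prod_abs_equispacedNode_sub {r i : ℕ} (hi : i ≤ r) :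
    ∏ j ∈ (range (r + 1)).erase i, |equispacedNode r i - equispacedNode r j|
      = (2 / r) ^ r * ((i ! * (r - i)! : ℕ) : ℝ) := by
  have hcard : #((range (r + 1)).erase i) = r := by
    simp [card_erase_of_mem, mem_range_succ_iff.mpr hi]
  simp_rw [equispacedNode_sub, abs_mul, prod_mul_distrib, prod_const, hcard,
    prod_erase_range_abs_sub r hi, abs_of_nonneg (by positivity : (0 : ℝ) ≤ 2 / r)]
  push_cast
  ring

noncomputable def monomialWeight (r k i : ℕ) : ℝ :=
  (Lagrange.basis (range (r + 1)) (equispacedNode r) i).coeff k / r.choose k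

theorem sum_monomialWeight_mul_add_pow {r k : ℕ} (hk : k ≤ r) (x y : ℝ) :
    ∑ i ∈ range (r + 1), monomialWeight r k i * (x + equispacedNode r i * y) ^ r
      = x ^ (r - k) * y ^ k := by
  have hmoments : ∀ j ≤ r, ∑ i ∈ range (r + 1),
      (Lagrange.basis (range (r + 1)) (equispacedNode r) i).coeff k * equispacedNode r i ^ j
        = if j = k then 1 else 0 := fun j hj ↦ by
    have hdeg : (X ^ j : ℝ[X]).degree < #(range (r + 1)) := by
      rw [degree_X_pow, card_range]; exact_mod_cast Nat.lt_succ_of_le hj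
    simpa [coeff_X_pow, mul_comm, eq_comm] using
      Lagrange.sum_eval_mul_coeff_basis (injOn_equispacedNode r) hdeg k
  have hchoose : (r.choose k : ℝ) ≠ 0 := by have := Nat.choose_pos hk; positivity
  simp_rw [monomialWeight, div_mul_eq_mul_div, ← sum_div,
    sum_mul_add_mul_pow_eq_of_moments _ _ _ hmoments]
  field_simp

theorem abs_monomialWeight_le {r k i : ℕ} (hk : k ≤ r) (hi : i ≤ r) :
    |monomialWeight r k i| ≤ (r / 2) ^ r * ((i ! * (r - i)! : ℕ) : ℝ)⁻¹ := by
  have hchoose : (0 : ℝ) < r.choose k := by have := Nat.choose_pos hk; positivity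
  have hcoeff := Lagrange.abs_coeff_basis_le (range (r + 1)) (equispacedNode r)
    (fun j hj ↦ abs_equispacedNode_le (mem_range_succ_iff.mp hj)) i k
  rw [prod_abs_equispacedNode_sub hi, card_erase_of_mem (mem_range_succ_iff.mpr hi), card_range,
    Nat.add_one_sub_one] at hcoeff
  rw [monomialWeight, abs_div, abs_of_pos hchoose, div_le_iff₀ hchoose]
  calc _ ≤ _ := hcoeff
    _ = _ := by rw [div_eq_mul_inv, mul_inv, ← inv_pow, inv_div]; ring

theorem sum_abs_monomialWeight_le {r k : ℕ} (hk : k ≤ r) :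
    ∑ i ∈ range (r + 1), |monomialWeight r k i| ≤ r ^ r / r ! :=
  calc ∑ i ∈ range (r + 1), |monomialWeight r k i|
      ≤ ∑ i ∈ range (r + 1), (r / 2) ^ r * ((i ! * (r - i)! : ℕ) : ℝ)⁻¹ :=
        sum_le_sum fun i hi ↦ abs_monomialWeight_le hk (mem_range_succ_iff.mp hi)
    _ = r ^ r / r ! := by
        rw [← mul_sum, sum_range_inv_factorial_mul_factorial, ← mul_div_assoc, ← mul_pow,
          div_mul_cancel₀ _ two_ne_zero]

theorem monomial_as_powers_of_binary_linear_forms_general (r₁ r₂ : ℕ) (h₁ : 1 ≤ r₁) :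
    ∃ β : Fin (r₁ + r₂ + 1) → ℝ,
      (∀ x y : ℝ,
        ∑ i, β i * (x + (-1 + 2 * ((i : ℕ) : ℝ) / ((r₁ + r₂ : ℕ) : ℝ)) * y) ^ (r₁ + r₂)
          = x ^ r₁ * y ^ r₂) ∧
      (∑ i, |β i|) < Real.exp ((r₁ + r₂ : ℕ) : ℝ) := by
  refine ⟨fun i ↦ monomialWeight (r₁ + r₂) r₂ i, fun x y ↦ ?_, ?_⟩
  · refine (Fin.sum_univ_eq_sum_range
      (fun i ↦ monomialWeight (r₁ + r₂) r₂ i * (x + equispacedNode (r₁ + r₂) i * y) ^ (r₁ + r₂))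
      _).trans ?_
    rw [sum_monomialWeight_mul_add_pow le_add_self, Nat.add_sub_cancel]
  · rw [Fin.sum_univ_eq_sum_range (fun i ↦ |monomialWeight (r₁ + r₂) r₂ i|)]
    exact (sum_abs_monomialWeight_le le_add_self).trans_lt
      (Real.pow_div_factorial_lt_exp (Nat.cast_pos.mpr (Nat.add_pos_left h₁ r₂)) _)

/-- for positive integers `r₁, r₂` with `r = r₁ + r₂` and equally spaced
points `λᵢ = -1 + 2i/r` in `[-1,1]`, there is a coefficient vector `β ∈ ℝ^{r+1}` with
`Σᵢ βᵢ (x + λᵢ y)^r = x^{r₁} y^{r₂}` for all real `x, y`, and `Σᵢ |βᵢ| < e^r`. -/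
theorem monomial_as_powers_of_binary_linear_forms (r₁ r₂ : ℕ) (h₁ : 1 ≤ r₁) (h₂ : 1 ≤ r₂) :
    ∃ β : Fin (r₁ + r₂ + 1) → ℝ,
      (∀ x y : ℝ,
        ∑ i, β i * (x + (-1 + 2 * ((i : ℕ) : ℝ) / ((r₁ + r₂ : ℕ) : ℝ)) * y) ^ (r₁ + r₂)
          = x ^ r₁ * y ^ r₂) ∧
      (∑ i, |β i|) < Real.exp ((r₁ + r₂ : ℕ) : ℝ) :=
  monomial_as_powers_of_binary_linear_forms_general r₁ r₂ h₁
end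

section
/- Let r ∈ ℕ with r ≥ 1 and let λᵢ = −1 + 2i/r for i = 0, 1, …, r. Then for every i ∈ {0, 1, …, r}, the product ∏_{j ≠ i} |λᵢ − λⱼ| (over j ∈ {0,…,r} with j ≠ i) satisfies ∏_{j ≠ i} |λᵢ − λⱼ| > (r+1) e^{−r}. -/
/-! The nodes are `λⱼ = -1 + (2 / r) j`, so for `c = i` the product equals
`(2 / r) ^ r * c! * (r - c)! = (2 / r) ^ r * r! / C(r, c)`. Stirling's lower bound
`r! ≥ √(2πr) (r / e) ^ r` and the Wallis-type bound `C(r, c) ^ 2 * (r + 1) ≤ 4 ^ r` make this at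
least `√(2πr) √(r + 1) e⁻ʳ`, which exceeds `(r + 1) e⁻ʳ` because `2πr > r + 1`. -/

open Finset Real Nat

theorem Nat.centralBinom_sq_mul_le_sixteen_pow (n : ℕ) :
    centralBinom n ^ 2 * (2 * n + 1) ≤ 16 ^ n := by
  induction n with
  | zero => simp
  | succ n ih =>
    refine Nat.le_of_mul_le_mul_right (c := (n + 1) ^ 2) ?_ (by positivity)
    calc centralBinom (n + 1) ^ 2 * (2 * (n + 1) + 1) * (n + 1) ^ 2
        = ((n + 1) * centralBinom (n + 1)) ^ 2 * (2 * n + 3) := by ring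
      _ = 4 * (2 * n + 3) * (2 * n + 1) * (centralBinom n ^ 2 * (2 * n + 1)) := by
          rw [succ_mul_centralBinom_succ]; ring
      _ ≤ 16 * (n + 1) ^ 2 * 16 ^ n := Nat.mul_le_mul (by nlinarith) ih
      _ = 16 ^ (n + 1) * (n + 1) ^ 2 := by ring

theorem Nat.choose_sq_mul_succ_le_four_pow (r c : ℕ) : r.choose c ^ 2 * (r + 1) ≤ 4 ^ r := by
  refine le_trans (Nat.mul_le_mul_right _ (Nat.pow_le_pow_left (choose_le_middle c r) 2)) ?_
  rcases Nat.even_or_odd' r with ⟨m, rfl | rfl⟩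
  · rw [Nat.mul_div_cancel_left m two_pos, ← centralBinom_eq_two_mul_choose, pow_mul]
    exact centralBinom_sq_mul_le_sixteen_pow m
  · have hcentral : centralBinom (m + 1) = 2 * (2 * m + 1).choose m := by
      rw [centralBinom_eq_two_mul_choose, show 2 * (m + 1) = 2 * m + 1 + 1 by ring,
        choose_succ_succ, choose_symm_half]
      ring
    have h := centralBinom_sq_mul_le_sixteen_pow (m + 1)
    rw [hcentral] at h
    rw [show (2 * m + 1) / 2 = m by omega]
    refine Nat.le_of_mul_le_mul_left ?_ four_pos
    calc 4 * ((2 * m + 1).choose m ^ 2 * (2 * m + 1 + 1))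
        ≤ (2 * (2 * m + 1).choose m) ^ 2 * (2 * (m + 1) + 1) := by ring_nf; omega
      _ ≤ 16 ^ (m + 1) := h
      _ = 4 * 4 ^ (2 * m + 1) := by rw [pow_succ 4, pow_mul]; ring

theorem Fin.prod_univ_erase_eq_prod_range_erase {M : Type*} [CommMonoid M] {n : ℕ}
    (f : ℕ → M) (i : Fin n) : ∏ j ∈ univ.erase i, f j = ∏ k ∈ (range n).erase i, f k := by
  calc ∏ j ∈ univ.erase i, f j = ∏ k ∈ (univ.erase i).map Fin.valEmbedding, f k :=
        (prod_map (univ.erase i) Fin.valEmbedding f).symm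
    _ = ∏ k ∈ (range n).erase i, f k := by
        rw [map_erase, Fin.map_valEmbedding_univ, Nat.Iio_eq_range]
        rfl

theorem prod_range_abs_sub_eq_factorial (c : ℕ) : ∏ j ∈ range c, |(c : ℝ) - j| = c ! := by
  rw [← prod_range_reflect, ← prod_range_add_one_eq_factorial, Nat.cast_prod]
  refine prod_congr rfl fun j hj => ?_
  have hj := mem_range.1 hj
  rw [Nat.cast_sub (by omega), Nat.cast_sub (by omega), abs_of_pos (by push_cast; linarith)]
  push_cast
  ring

theorem prod_Ico_abs_sub_eq_factorial (c n : ℕ) :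
    ∏ j ∈ Ico (c + 1) (c + 1 + n), |(c : ℝ) - j| = n ! := by
  rw [prod_Ico_eq_prod_range, Nat.add_sub_cancel_left, ← prod_range_add_one_eq_factorial,
    Nat.cast_prod]
  refine prod_congr rfl fun k _ => ?_
  rw [abs_sub_comm, abs_of_pos (by push_cast; linarith)]
  push_cast
  ring

theorem prod_range_erase_abs_sub_eq_factorial_mul_factorial (r c : ℕ) (hc : c ≤ r) :
    ∏ j ∈ (range (r + 1)).erase c, |(c : ℝ) - j| = c ! * (r - c)! := by
  have hsplit : (range (r + 1)).erase c = range c ∪ Ico (c + 1) (c + 1 + (r - c)) := by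
    ext j
    simp only [mem_erase, mem_range, mem_union, mem_Ico]
    omega
  have hdisj : Disjoint (range c) (Ico (c + 1) (c + 1 + (r - c))) := by
    simp only [disjoint_left, mem_range, mem_Ico]
    omega
  rw [hsplit, prod_union hdisj, prod_range_abs_sub_eq_factorial, prod_Ico_abs_sub_eq_factorial]

theorem add_one_mul_exp_neg_lt_two_div_pow_mul_factorials (r c : ℕ) (hr : r ≠ 0) (hc : c ≤ r) :
    ((r : ℝ) + 1) * exp (-r) < (2 / r) ^ r * (c ! * (r - c)! : ℝ) := by
  set F : ℝ := (2 / r) ^ r * (c ! * (r - c)! : ℝ)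
  set C : ℝ := (r.choose c : ℝ)
  have hFC : F * C = (2 / r) ^ r * r ! := by
    rw [← choose_mul_factorial_mul_factorial hc]
    push_cast
    ring
  have hstirling : 2 ^ r * exp (-r) * √(2 * π * r) ≤ F * C := by
    calc 2 ^ r * exp (-r) * √(2 * π * r) = (2 / r) ^ r * (√(2 * π * r) * (r / exp 1) ^ r) := by
          rw [div_pow, div_pow, exp_one_pow, exp_neg]
          field_simp
      _ ≤ F * C := hFC ▸ mul_le_mul_of_nonneg_left (Stirling.le_factorial_stirling r) (by positivity)
  have hbinom : C * √(r + 1) ≤ 2 ^ r := by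
    refine (pow_le_pow_iff_left₀ (by positivity) (by positivity) two_ne_zero).1 ?_
    have h : (r.choose c : ℝ) ^ 2 * (r + 1) ≤ 4 ^ r := by
      exact_mod_cast choose_sq_mul_succ_le_four_pow r c
    rw [mul_pow, sq_sqrt (by positivity), ← pow_mul, mul_comm r, pow_mul]
    norm_num
    exact h
  have hsqrt : √(r + 1) < √(2 * π * r) := by
    gcongr
    have hr1 : (1 : ℝ) ≤ r := by exact_mod_cast Nat.one_le_iff_ne_zero.2 hr
    nlinarith [pi_gt_three]
  refine lt_of_mul_lt_mul_left (a := 2 ^ r) ?_ (by positivity)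
  calc 2 ^ r * (((r : ℝ) + 1) * exp (-r)) = 2 ^ r * exp (-r) * √(r + 1) * √(r + 1) := by
        rw [mul_assoc _ (√_), mul_self_sqrt (by positivity)]; ring
    _ < 2 ^ r * exp (-r) * √(2 * π * r) * √(r + 1) := by gcongr
    _ ≤ F * C * √(r + 1) := by gcongr
    _ ≤ 2 ^ r * F := by rw [mul_assoc, mul_comm]; gcongr

/-- for `r ≥ 1` and equally spaced points `λᵢ = -1 + 2i/r`, `i = 0,…,r`,
in `[-1,1]`, for every `i` the product of distances to the other nodes satisfies
`∏_{j ≠ i} |λᵢ - λⱼ| > (r+1) e^{-r}`. -/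
theorem node_distance_product_lower_bound (r : ℕ) (hr : 1 ≤ r) (i : Fin (r + 1)) :
    ((r : ℝ) + 1) * Real.exp (-(r : ℝ)) <
      ∏ j ∈ Finset.univ.erase i,
        |(-1 + 2 * ((i : ℕ) : ℝ) / (r : ℝ)) - (-1 + 2 * ((j : ℕ) : ℝ) / (r : ℝ))| := by
  have hr0 : r ≠ 0 := Nat.one_le_iff_ne_zero.1 hr
  have hnode (j : Fin (r + 1)) :
      |(-1 + 2 * ((i : ℕ) : ℝ) / r) - (-1 + 2 * ((j : ℕ) : ℝ) / r)| = 2 / r * |(i : ℝ) - j| := by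
    rw [← abs_of_pos (by positivity : (0 : ℝ) < 2 / r), ← abs_mul]
    ring_nf
  rw [prod_congr rfl fun j _ => hnode j, prod_mul_distrib, prod_const,
    card_erase_of_mem (mem_univ i), Finset.card_fin, Nat.add_sub_cancel,
    Fin.prod_univ_erase_eq_prod_range_erase (fun j : ℕ => |(i : ℝ) - j|),
    prod_range_erase_abs_sub_eq_factorial_mul_factorial r i i.is_le]
  exact add_one_mul_exp_neg_lt_two_div_pow_mul_factorials r i hr0 i.is_le
end

section
/- For every u ∈ ℕ and every r₁, r₂, …, r_u ∈ ℕ with r = r₁ + ⋯ + r_u, there exist a real sequence (βᵢ)_{i ∈ ℕ₀} and numbers λ_{ij} ∈ [−1,1] for i ∈ ℕ₀, j ∈ {1,…,u}, such that Σᵢ βᵢ (Σ_{j=1}^{u} λ_{ij} zⱼ)^r = z₁^{r₁} z₂^{r₂} ⋯ z_u^{r_u} for all z₁, …, z_u ∈ ℝ, and Σᵢ |βᵢ| ≤ e^{(u−1)r}. -/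
/-!
Polarization: with `n = |ι|`, summing `(∏ εᵢ) (∑ εᵢ xᵢ)ⁿ` over all sign vectors `ε ∈ {±1}^ι`
cancels every term of the multinomial expansion that misses some variable (flipping that
variable's sign negates the term), leaving `2ⁿ n! ∏ xᵢ`. Applied to the variables `z_j`, each
repeated `r_j` times, and with the linear forms rescaled by `1/n`, this writes the monomial as a
combination of `2ⁿ` powers of linear forms with coefficients in `[-1, 1]` and combination
coefficients of absolute value `nⁿ / (2ⁿ n!)`; their ℓ¹-norm is `nⁿ / n! ≤ eⁿ ≤ e^{(u-1)n}` as soon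
as `u ≥ 2`, while for `u ≤ 1` the monomial is itself such a power. Padding with zeros turns the
finite sum into a series.
-/

open Finset Function Fintype
open scoped Nat

universe v

def boolSign {R : Type*} [Ring R] (b : Bool) : R := if b then 1 else -1

lemma boolSign_not {R : Type*} [Ring R] (b : Bool) : boolSign (R := R) (!b) = -boolSign b := by
  cases b <;> simp [boolSign]

lemma boolSign_mul_self {R : Type*} [Ring R] (b : Bool) :
    boolSign (R := R) b * boolSign b = 1 := by
  cases b <;> simp [boolSign]

lemma abs_boolSign (b : Bool) : |boolSign (R := ℝ) b| = 1 := by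
  cases b <;> simp [boolSign]

section Polarization

variable {R ι : Type*} [CommRing R] [Fintype ι] [DecidableEq ι]

lemma prod_boolSign_update_not (ε : ι → Bool) (i : ι) :
    ∏ k, boolSign (R := R) (update ε i (!ε i) k) = -∏ k, boolSign (ε k) := by
  rw [← mul_prod_erase _ _ (mem_univ i), ← mul_prod_erase _ _ (mem_univ i), update_self,
    boolSign_not, neg_mul]
  congr 2
  exact prod_congr rfl fun k hk => by rw [update_of_ne (ne_of_mem_erase hk)]

lemma sum_prod_boolSign_mul_eq_zero (i : ι) (g : (ι → Bool) → R)
    (hg : ∀ ε, g (update ε i (!ε i)) = g ε) :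
    ∑ ε, (∏ k, boolSign (ε k)) * g ε = 0 :=
  sum_ninvolution (fun ε => update ε i (!ε i))
    (fun ε => by rw [hg, prod_boolSign_update_not]; ring)
    (fun ε _ h => by simpa using congr_fun h i)
    (fun _ => mem_univ _) (fun ε => by simp)

lemma sum_prod_boolSign_mul_prod_comp_of_not_surjective {n : ℕ} (f : Fin n → ι)
    (hf : ¬Surjective f) :
    ∑ ε : ι → Bool, (∏ i, boolSign (ε i)) * ∏ k, boolSign (R := R) (ε (f k)) = 0 := by
  obtain ⟨i, hi⟩ := not_forall.mp hf
  exact sum_prod_boolSign_mul_eq_zero i _ fun ε =>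
    prod_congr rfl fun k _ => by rw [update_of_ne fun h => hi ⟨k, h⟩]

lemma sum_prod_boolSign_mul_prod_comp_equiv {κ : Type*} [Fintype κ] (σ : κ ≃ ι) :
    ∑ ε : ι → Bool, (∏ i, boolSign (ε i)) * ∏ k, boolSign (R := R) (ε (σ k)) = 2 ^ card ι := by
  calc _ = ∑ _ε : ι → Bool, (1 : R) := sum_congr rfl fun ε _ => by
        rw [Equiv.prod_comp σ fun i => boolSign (ε i), ← prod_mul_distrib]
        exact prod_eq_one fun i _ => boolSign_mul_self _
    _ = 2 ^ card ι := by simp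

theorem sum_prod_boolSign_mul_sum_pow (x : ι → R) :
    ∑ ε : ι → Bool, (∏ i, boolSign (ε i)) * (∑ i, boolSign (ε i) * x i) ^ card ι
      = 2 ^ card ι * (card ι)! * ∏ i, x i := by
  set n := card ι
  calc _ = ∑ f : Fin n → ι,
        (∑ ε : ι → Bool, (∏ i, boolSign (ε i)) * ∏ k, boolSign (ε (f k))) * ∏ k, x (f k) := by
        simp_rw [Fintype.sum_pow, mul_sum, prod_mul_distrib, sum_mul, mul_assoc]
        exact sum_comm
    _ = ∑ _σ : Fin n ≃ ι, 2 ^ n * ∏ i, x i := by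
        refine (Fintype.sum_of_injective _ DFunLike.coe_injective _ _ (fun f hf => ?_)
          fun σ => ?_).symm
        · have hns : ¬Surjective f := fun hs => hf
            ⟨.ofBijective f ((Fintype.bijective_iff_surjective_and_card f).mpr ⟨hs, by simp [n]⟩),
              rfl⟩
          rw [sum_prod_boolSign_mul_prod_comp_of_not_surjective f hns, zero_mul]
        · rw [sum_prod_boolSign_mul_prod_comp_equiv, Equiv.prod_comp σ]
    _ = 2 ^ n * n ! * ∏ i, x i := by
        rw [sum_const, card_univ, Fintype.card_equiv (Fintype.equivFin ι).symm, nsmul_eq_mul,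
          Fintype.card_fin]
        ring

theorem sum_prod_boolSign_mul_pow_eq_prod_pow {κ : Type*} [Fintype κ] [DecidableEq κ] (r : κ → ℕ)
    (z : κ → R) :
    ∑ ε : (Σ j, Fin (r j)) → Bool,
        (∏ i, boolSign (ε i)) * (∑ j, (∑ t, boolSign (ε ⟨j, t⟩)) * z j) ^ (∑ j, r j)
      = 2 ^ (∑ j, r j) * (∑ j, r j)! * ∏ j, z j ^ r j := by
  have h := sum_prod_boolSign_mul_sum_pow (fun i : Σ j, Fin (r j) => z i.1)
  rw [Fintype.prod_sigma] at h
  simpa only [Fintype.card_sigma, Fintype.card_fin, Fintype.sum_sigma, prod_const, card_univ,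
    ← sum_mul] using h

end Polarization

lemma sum_pow_sum_eq_prod_pow_of_subsingleton {R κ : Type*} [CommSemiring R] [Fintype κ]
    [Subsingleton κ] (r : κ → ℕ) (z : κ → R) : (∑ j, z j) ^ (∑ j, r j) = ∏ j, z j ^ r j := by
  cases isEmpty_or_nonempty κ with
  | inl _ => simp
  | inr h =>
    obtain ⟨j⟩ := h
    rw [Fintype.sum_subsingleton _ j, Fintype.sum_subsingleton _ j, Fintype.prod_subsingleton _ j]

theorem exists_fintype_sum_mul_sum_pow_eq_prod_pow {κ : Type v} [Fintype κ] [DecidableEq κ]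
    (r : κ → ℕ) :
    ∃ (α : Type v) (_ : Fintype α) (β : α → ℝ) (lam : α → κ → ℝ),
      (∀ a j, lam a j ∈ Set.Icc (-1 : ℝ) 1) ∧
      ∑ a, |β a| = ((∑ j, r j : ℕ) : ℝ) ^ (∑ j, r j) / (∑ j, r j)! ∧
      ∀ z : κ → ℝ, ∑ a, β a * (∑ j, lam a j * z j) ^ (∑ j, r j) = ∏ j, z j ^ r j := by
  set n := ∑ j, r j
  have hnorm : (n : ℝ) ^ n * (n : ℝ)⁻¹ ^ n = 1 := by
    rw [← mul_pow]
    rcases eq_or_ne n 0 with h | h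
    · simp [h]
    · rw [mul_inv_cancel₀ (by exact_mod_cast h), one_pow]
  refine ⟨(Σ j, Fin (r j)) → Bool, inferInstance,
    fun ε => (∏ i, boolSign (ε i)) * ((n : ℝ) ^ n / (2 ^ n * n !)),
    fun ε j => (n : ℝ)⁻¹ * ∑ t, boolSign (ε ⟨j, t⟩), fun ε j => ?_, ?_, fun z => ?_⟩
  · have hsum : |∑ t, boolSign (R := ℝ) (ε ⟨j, t⟩)| ≤ n := calc
      _ ≤ ∑ t : Fin (r j), |boolSign (R := ℝ) (ε ⟨j, t⟩)| := abs_sum_le_sum_abs _ _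
      _ = r j := by simp [abs_boolSign]
      _ ≤ n := by exact_mod_cast single_le_sum (fun j _ => Nat.zero_le (r j)) (mem_univ j)
    rw [Set.mem_Icc, ← abs_le, abs_mul, abs_inv, Nat.abs_cast]
    exact inv_mul_le_one_of_le₀ hsum (Nat.cast_nonneg n)
  · have hcard : Fintype.card (Σ j, Fin (r j)) = n := by simp [n]
    have hD : (0 : ℝ) ≤ (n : ℝ) ^ n / (2 ^ n * n !) := by positivity
    simp only [abs_mul, abs_prod, abs_boolSign, prod_const_one, one_mul, abs_of_nonneg hD,
      sum_const, card_univ, card_fun, hcard, card_bool, nsmul_eq_mul, Nat.cast_pow, Nat.cast_ofNat]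
    field_simp
  · calc _ = ∑ ε : (Σ j, Fin (r j)) → Bool, (2 ^ n * n ! : ℝ)⁻¹ *
          ((∏ i, boolSign (ε i)) * (∑ j, (∑ t, boolSign (ε ⟨j, t⟩)) * z j) ^ n) :=
          sum_congr rfl fun ε _ => by
            simp_rw [mul_assoc, ← mul_sum, mul_pow]
            linear_combination (∏ i, boolSign (ε i)) * (∑ j, (∑ t, boolSign (ε ⟨j, t⟩)) * z j) ^ n /
              (2 ^ n * n ! : ℝ) * hnorm
      _ = ∏ j, z j ^ r j := by
        rw [← mul_sum, sum_prod_boolSign_mul_pow_eq_prod_pow, ← mul_assoc,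
          inv_mul_cancel₀ (by positivity), one_mul]

theorem exists_fintype_sum_mul_sum_pow_eq_prod_pow_le_exp (u : ℕ) (r : Fin u → ℕ) :
    ∃ (α : Type) (_ : Fintype α) (β : α → ℝ) (lam : α → Fin u → ℝ),
      (∀ a j, lam a j ∈ Set.Icc (-1 : ℝ) 1) ∧
      ∑ a, |β a| ≤ Real.exp (((u : ℝ) - 1) * ((∑ j, r j : ℕ) : ℝ)) ∧
      ∀ z : Fin u → ℝ, ∑ a, β a * (∑ j, lam a j * z j) ^ (∑ j, r j) = ∏ j, z j ^ r j := by
  rcases le_or_gt u 1 with hu | hu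
  · have : Subsingleton (Fin u) := Fin.subsingleton_iff_le_one.mpr hu
    refine ⟨Unit, inferInstance, fun _ => 1, fun _ _ => 1, by simp, ?_, fun z => ?_⟩
    · interval_cases u <;> simp
    · simpa using sum_pow_sum_eq_prod_pow_of_subsingleton r z
  · obtain ⟨α, _, β, lam, hlam, hβ, hrepr⟩ := exists_fintype_sum_mul_sum_pow_eq_prod_pow r
    refine ⟨α, inferInstance, β, lam, hlam, ?_, hrepr⟩
    have hu' : (1 : ℝ) ≤ u - 1 := by
      have : (2 : ℝ) ≤ u := by exact_mod_cast hu
      linarith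
    rw [hβ]
    exact (Real.pow_div_factorial_le_exp _ (Nat.cast_nonneg _) _).trans
      (Real.exp_le_exp.mpr (le_mul_of_one_le_left (Nat.cast_nonneg _) hu'))

lemma exists_nat_seq_hasSum_comp_eq_sum {α X M : Type*} [Fintype α] [AddCommMonoid M]
    [TopologicalSpace M] {S : Set X} (x : α → X) (hx : ∀ a, x a ∈ S) (x₀ : X) (h₀ : x₀ ∈ S) :
    ∃ y : ℕ → X, (∀ i, y i ∈ S) ∧
      ∀ F : X → M, F x₀ = 0 → HasSum (fun i => F (y i)) (∑ a, F (x a)) := by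
  set e : α → ℕ := Fin.val ∘ Fintype.equivFin α
  have he : Injective e := Fin.val_injective.comp (Fintype.equivFin α).injective
  refine ⟨extend e x fun _ => x₀, fun i => ?_, fun F hF => ?_⟩
  · by_cases hi : ∃ a, e a = i
    · obtain ⟨a, rfl⟩ := hi
      rw [he.extend_apply]
      exact hx a
    · rw [extend_apply' _ _ _ hi]
      exact h₀
  · have hFy : (fun i => F (extend e x (fun _ => x₀) i)) = extend e (F ∘ x) 0 := by
      funext i
      simp only [apply_extend F, comp_def, hF]
      rfl
    rw [hFy, hasSum_extend_zero he]
    exact hasSum_fintype _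

theorem monomial_as_powers_of_linear_forms_general (u : ℕ)
    (r : Fin u → ℕ) :
    ∃ (β : ℕ → ℝ) (lam : ℕ → Fin u → ℝ),
      (∀ i j, lam i j ∈ Set.Icc (-1 : ℝ) 1) ∧
      Summable (fun i => |β i|) ∧
      (∑' i, |β i|) ≤ Real.exp (((u : ℝ) - 1) * ((∑ j, r j : ℕ) : ℝ)) ∧
      (∀ z : Fin u → ℝ,
        Summable (fun i => β i * (∑ j, lam i j * z j) ^ (∑ j, r j)) ∧
        (∑' i, β i * (∑ j, lam i j * z j) ^ (∑ j, r j)) = ∏ j, z j ^ r j) := by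
  obtain ⟨α, _, β, lam, hlam, hβ, hrepr⟩ := exists_fintype_sum_mul_sum_pow_eq_prod_pow_le_exp u r
  obtain ⟨y, hyS, hy⟩ := exists_nat_seq_hasSum_comp_eq_sum (M := ℝ)
    (S := {p : ℝ × (Fin u → ℝ) | ∀ j, p.2 j ∈ Set.Icc (-1 : ℝ) 1}) (fun a => (β a, lam a)) hlam
    0 fun _ => by simp
  have habs := hy (fun p => |p.1|) (by simp)
  refine ⟨fun i => (y i).1, fun i => (y i).2, hyS, habs.summable, habs.tsum_eq ▸ hβ, fun z => ?_⟩
  have hsum := hy (fun p => p.1 * (∑ j, p.2 j * z j) ^ (∑ j, r j)) (by simp)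
  exact ⟨hsum.summable, hsum.tsum_eq.trans (hrepr z)⟩

/-- every monomial `z₁^{r₁} ⋯ z_u^{r_u}` of total degree `r = r₁ + ⋯ + r_u`
is an absolutely convergent linear combination of `r`-th powers of linear forms with
coefficient vectors in `[-1,1]^u`, and the ℓ¹-norm of the combination coefficients is at
most `e^{(u-1)r}`. -/
theorem monomial_as_powers_of_linear_forms (u : ℕ) (hu : 1 ≤ u)
    (r : Fin u → ℕ) (hr : ∀ j, 1 ≤ r j) :
    ∃ (β : ℕ → ℝ) (lam : ℕ → Fin u → ℝ),
      (∀ i j, lam i j ∈ Set.Icc (-1 : ℝ) 1) ∧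
      Summable (fun i => |β i|) ∧
      (∑' i, |β i|) ≤ Real.exp (((u : ℝ) - 1) * ((∑ j, r j : ℕ) : ℝ)) ∧
      (∀ z : Fin u → ℝ,
        Summable (fun i => β i * (∑ j, lam i j * z j) ^ (∑ j, r j)) ∧
        (∑' i, β i * (∑ j, lam i j * z j) ^ (∑ j, r j)) = ∏ j, z j ^ r j) :=
  monomial_as_powers_of_linear_forms_general u r
end

section
/- Let B > 0 and let f : ℝ^m → ℝ be infinitely differentiable with ‖D^r f‖_∞ ≤ √(r!) · B^{|r|₁} for every multi-index r ∈ ℕ₀^m. Then for every integer k ≥ 1 and every multi-index j ∈ ℕ₀^m, the Taylor coefficient a_{j,k} = D^j(f^k)(0) of the k-th power f^k satisfies |a_{j,k}| ≤ √(j!) · (kB)^{|j|₁}. -/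
/-- Partial derivative of `f : ℝ^m → ℝ` in the `i`-th coordinate direction. -/
noncomputable def partialDeriv {m : ℕ} (i : Fin m) (f : (Fin m → ℝ) → ℝ) :
    (Fin m → ℝ) → ℝ :=
  fun z => fderiv ℝ f z (Pi.single i 1)

/-- Multi-index partial derivative `D^r f = ∂^{|r|₁} f / ∂z₁^{r₁} ⋯ ∂z_m^{r_m}`. -/
noncomputable def multiDeriv {m : ℕ} (r : Fin m → ℕ) (f : (Fin m → ℝ) → ℝ) :
    (Fin m → ℝ) → ℝ :=
  ((List.ofFn fun i : Fin m => (partialDeriv i)^[r i]).foldr (· ∘ ·) id) f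

namespace TaylorAux

variable {m : ℕ}

lemma contDiff_partialDeriv (i : Fin m) {f : (Fin m → ℝ) → ℝ} (hf : ContDiff ℝ (⊤ : ℕ∞) f) :
    ContDiff ℝ (⊤ : ℕ∞) (partialDeriv i f) :=
  (hf.fderiv_right (by simp)).clm_apply contDiff_const

lemma contDiff_iter (i : Fin m) (n : ℕ) {f : (Fin m → ℝ) → ℝ} (hf : ContDiff ℝ (⊤ : ℕ∞) f) :
    ContDiff ℝ (⊤ : ℕ∞) ((partialDeriv i)^[n] f) := by
  induction n with
  | zero => simpa using hf
  | succ n ih => rw [Function.iterate_succ_apply']; exact contDiff_partialDeriv i ih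

lemma partialDeriv_sum (i : Fin m) {ι : Type*} (S : Finset ι) (F : ι → (Fin m → ℝ) → ℝ)
    (hF : ∀ s ∈ S, ContDiff ℝ (⊤ : ℕ∞) (F s)) :
    partialDeriv i (fun z => ∑ s ∈ S, F s z) = fun z => ∑ s ∈ S, partialDeriv i (F s) z := by
  funext z
  unfold partialDeriv
  rw [fderiv_fun_sum (fun s hs => ((hF s hs).differentiable (by simp)).differentiableAt)]
  simp

lemma partialDeriv_const_mul (i : Fin m) (c : ℝ) {F : (Fin m → ℝ) → ℝ} (hF : ContDiff ℝ (⊤ : ℕ∞) F) :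
    partialDeriv i (fun z => c * F z) = fun z => c * partialDeriv i F z := by
  funext z
  unfold partialDeriv
  rw [fderiv_const_mul ((hF.differentiable (by simp)).differentiableAt)]
  simp

lemma partialDeriv_mul (i : Fin m) {u v : (Fin m → ℝ) → ℝ}
    (hu : ContDiff ℝ (⊤ : ℕ∞) u) (hv : ContDiff ℝ (⊤ : ℕ∞) v) :
    partialDeriv i (fun z => u z * v z) =
      fun z => partialDeriv i u z * v z + u z * partialDeriv i v z := by
  funext z
  unfold partialDeriv
  rw [fderiv_fun_mul ((hu.differentiable (by simp)).differentiableAt)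
    ((hv.differentiable (by simp)).differentiableAt)]
  simp
  ring

lemma iter_sum (i : Fin m) (n : ℕ) {ι : Type*} (S : Finset ι) (F : ι → (Fin m → ℝ) → ℝ)
    (hF : ∀ s ∈ S, ContDiff ℝ (⊤ : ℕ∞) (F s)) :
    (partialDeriv i)^[n] (fun z => ∑ s ∈ S, F s z)
      = fun z => ∑ s ∈ S, (partialDeriv i)^[n] (F s) z := by
  induction n with
  | zero => simp
  | succ n ih =>
    rw [Function.iterate_succ_apply', ih,
      partialDeriv_sum i S _ (fun s hs => contDiff_iter i n (hF s hs))]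
    simp [Function.iterate_succ_apply']

lemma iter_const_mul (i : Fin m) (n : ℕ) (c : ℝ) {F : (Fin m → ℝ) → ℝ}
    (hF : ContDiff ℝ (⊤ : ℕ∞) F) :
    (partialDeriv i)^[n] (fun z => c * F z) = fun z => c * (partialDeriv i)^[n] F z := by
  induction n with
  | zero => simp
  | succ n ih =>
    rw [Function.iterate_succ_apply', ih, partialDeriv_const_mul i c (contDiff_iter i n hF)]
    simp [Function.iterate_succ_apply']

lemma binom_step (n : ℕ) (A Bv : ℕ → ℝ) :
    ∑ a ∈ Finset.range (n+1), (n.choose a : ℝ) * (A (a+1) * Bv (n-a) + A a * Bv (n-a+1)) =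
    ∑ a ∈ Finset.range (n+1+1), ((n+1).choose a : ℝ) * (A a * Bv (n+1-a)) := by
  have h1 : ∑ a ∈ Finset.range (n+1+1), ((n+1).choose a : ℝ) * (A a * Bv (n+1-a))
      = ∑ a ∈ Finset.range (n+1), ((n+1).choose (a+1) : ℝ) * (A (a+1) * Bv (n+1-(a+1)))
        + ((n+1).choose 0 : ℝ) * (A 0 * Bv (n+1-0)) :=
    Finset.sum_range_succ' _ (n+1)
  have h2 : ∑ a ∈ Finset.range (n+1+1), (n.choose a : ℝ) * (A a * Bv (n+1-a))
      = ∑ a ∈ Finset.range (n+1), (n.choose (a+1) : ℝ) * (A (a+1) * Bv (n+1-(a+1)))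
        + (n.choose 0 : ℝ) * (A 0 * Bv (n+1-0)) :=
    Finset.sum_range_succ' _ (n+1)
  have h3 : ∑ a ∈ Finset.range (n+1+1), (n.choose a : ℝ) * (A a * Bv (n+1-a))
      = ∑ a ∈ Finset.range (n+1), (n.choose a : ℝ) * (A a * Bv (n+1-a)) := by
    rw [Finset.sum_range_succ]
    simp [Nat.choose_succ_self]
  have h4 : ∀ a ∈ Finset.range (n+1),
      (n.choose a : ℝ) * (A (a+1) * Bv (n-a) + A a * Bv (n-a+1))
      = (n.choose a : ℝ) * (A (a+1) * Bv (n-a)) + (n.choose a : ℝ) * (A a * Bv (n+1-a)) := by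
    intro a ha
    have : n - a + 1 = n + 1 - a := by
      have := Finset.mem_range.mp ha; omega
    rw [← this]; ring
  rw [Finset.sum_congr rfl h4, Finset.sum_add_distrib, h1, ← h3, h2]
  have h5 : ∀ a ∈ Finset.range (n+1),
      ((n+1).choose (a+1) : ℝ) * (A (a+1) * Bv (n+1-(a+1)))
      = (n.choose a : ℝ) * (A (a+1) * Bv (n-a))
        + (n.choose (a+1) : ℝ) * (A (a+1) * Bv (n+1-(a+1))) := by
    intro a ha
    rw [Nat.choose_succ_succ]
    push_cast
    ring
  rw [Finset.sum_congr rfl h5, Finset.sum_add_distrib]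
  simp
  ring
lemma iter_mul (i : Fin m) {u v : (Fin m → ℝ) → ℝ}
    (hu : ContDiff ℝ (⊤ : ℕ∞) u) (hv : ContDiff ℝ (⊤ : ℕ∞) v) (n : ℕ) :
    (partialDeriv i)^[n] (fun z => u z * v z)
      = fun z => ∑ a ∈ Finset.range (n+1),
          (n.choose a : ℝ) * ((partialDeriv i)^[a] u z * (partialDeriv i)^[n-a] v z) := by
  induction n with
  | zero => simp
  | succ n ih =>
    rw [Function.iterate_succ_apply', ih,
      partialDeriv_sum i _ _ (fun a _ =>
        contDiff_const.mul ((contDiff_iter i a hu).mul (contDiff_iter i (n-a) hv)))]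
    funext z
    have hterm : ∀ a ∈ Finset.range (n+1),
        partialDeriv i (fun z => (n.choose a : ℝ) *
            ((partialDeriv i)^[a] u z * (partialDeriv i)^[n-a] v z)) z
        = (n.choose a : ℝ) * ((partialDeriv i)^[a+1] u z * (partialDeriv i)^[n-a] v z
            + (partialDeriv i)^[a] u z * (partialDeriv i)^[n-a+1] v z) := by
      intro a _
      rw [partialDeriv_const_mul i _ ((contDiff_iter i a hu).mul (contDiff_iter i (n-a) hv))]
      have h2 := congrFun (partialDeriv_mul i (contDiff_iter i a hu) (contDiff_iter i (n-a) hv)) z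
      simp only [h2, Function.iterate_succ_apply']
    rw [Finset.sum_congr rfl hterm]
    exact binom_step n (fun a => (partialDeriv i)^[a] u z) (fun b => (partialDeriv i)^[b] v z)
noncomputable def mdF (t : ℕ) (r : Fin m → ℕ) (f : (Fin m → ℝ) → ℝ) : (Fin m → ℝ) → ℝ :=
  if h : t < m then (partialDeriv ⟨t, h⟩)^[r ⟨t, h⟩] (mdF (t+1) r f) else f
termination_by m - t

lemma mdF_of_ge {t : ℕ} (h : ¬ t < m) (r : Fin m → ℕ) (f : (Fin m → ℝ) → ℝ) :
    mdF t r f = f := by rw [mdF, dif_neg h]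

lemma mdF_step {t : ℕ} (h : t < m) (r : Fin m → ℕ) (f : (Fin m → ℝ) → ℝ) :
    mdF t r f = (partialDeriv ⟨t, h⟩)^[r ⟨t, h⟩] (mdF (t+1) r f) := by
  rw [mdF, dif_pos h]

lemma foldr_drop_aux (d : ℕ) : ∀ t, m ≤ t + d → ∀ (r : Fin m → ℕ) (f : (Fin m → ℝ) → ℝ),
    (((List.ofFn fun i : Fin m => (partialDeriv i)^[r i]).drop t).foldr (· ∘ ·) id) f
      = mdF t r f := by
  induction d with
  | zero =>
    intro t ht r f
    have h : ¬ t < m := by omega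
    rw [List.drop_eq_nil_of_le (by simpa using (by omega : m ≤ t)), mdF_of_ge h]
    rfl
  | succ d ih =>
    intro t ht r f
    by_cases h : t < m
    · rw [List.drop_eq_getElem_cons (by simpa using h), List.foldr_cons,
        List.getElem_ofFn]
      have := ih (t+1) (by omega) r f
      simp only [Function.comp_apply] at this ⊢
      rw [this, mdF_step h]
    · rw [List.drop_eq_nil_of_le (by simpa using (by omega : m ≤ t)), mdF_of_ge h]
      rfl

lemma multiDeriv_eq_mdF (r : Fin m → ℕ) (f : (Fin m → ℝ) → ℝ) :
    multiDeriv r f = mdF 0 r f := by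
  have := foldr_drop_aux (m := m) m 0 (by omega) r f
  simpa [multiDeriv] using this

lemma mdF_congr_aux (d : ℕ) : ∀ t, m ≤ t + d → ∀ (r r' : Fin m → ℕ)
    (_ : ∀ i : Fin m, t ≤ i.val → r i = r' i) (f : (Fin m → ℝ) → ℝ),
    mdF t r f = mdF t r' f := by
  induction d with
  | zero =>
    intro t ht r r' hrr f
    have h : ¬ t < m := by omega
    rw [mdF_of_ge h, mdF_of_ge h]
  | succ d ih =>
    intro t ht r r' hrr f
    by_cases h : t < m
    · rw [mdF_step h, mdF_step h, hrr ⟨t, h⟩ le_rfl,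
        ih (t+1) (by omega) r r' (fun i hi => hrr i (by omega)) f]
    · rw [mdF_of_ge h, mdF_of_ge h]

lemma mdF_congr {t : ℕ} {r r' : Fin m → ℕ} (hrr : ∀ i : Fin m, t ≤ i.val → r i = r' i)
    (f : (Fin m → ℝ) → ℝ) : mdF t r f = mdF t r' f :=
  mdF_congr_aux (m := m) m t (by omega) r r' hrr f

lemma contDiff_mdF_aux (d : ℕ) : ∀ t, m ≤ t + d → ∀ (r : Fin m → ℕ)
    {f : (Fin m → ℝ) → ℝ} (_ : ContDiff ℝ (⊤ : ℕ∞) f), ContDiff ℝ (⊤ : ℕ∞) (mdF t r f) := by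
  induction d with
  | zero =>
    intro t ht r f hf
    rw [mdF_of_ge (by omega)]; exact hf
  | succ d ih =>
    intro t ht r f hf
    by_cases h : t < m
    · rw [mdF_step h]
      exact contDiff_iter _ _ (ih (t+1) (by omega) r hf)
    · rw [mdF_of_ge h]; exact hf

lemma contDiff_mdF {t : ℕ} (r : Fin m → ℕ) {f : (Fin m → ℝ) → ℝ} (hf : ContDiff ℝ (⊤ : ℕ∞) f) :
    ContDiff ℝ (⊤ : ℕ∞) (mdF t r f) :=
  contDiff_mdF_aux (m := m) m t (by omega) r hf
lemma mdF_mul_aux (d : ℕ) : ∀ t, m ≤ t + d → ∀ (r : Fin m → ℕ),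
    (∀ i : Fin m, i.val < t → r i = 0) →
    ∀ {u v : (Fin m → ℝ) → ℝ}, ContDiff ℝ (⊤ : ℕ∞) u → ContDiff ℝ (⊤ : ℕ∞) v →
    mdF t r (fun z => u z * v z) = fun z =>
      ∑ s ∈ Fintype.piFinset (fun i => Finset.range (r i + 1)),
        (∏ i, ((r i).choose (s i) : ℝ)) *
          (mdF t s u z * mdF t (fun i => r i - s i) v z) := by
  induction d with
  | zero =>
    intro t ht r hr u v hu hv
    have h : ¬ t < m := by omega
    have hr0 : ∀ i : Fin m, r i = 0 := fun i => hr i (by omega)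
    have hset : Fintype.piFinset (fun i : Fin m => Finset.range (r i + 1))
        = {fun _ => 0} := by
      ext s
      simp [Fintype.mem_piFinset, funext_iff, Nat.lt_succ_iff, hr0, Nat.le_zero]
    rw [hset, mdF_of_ge h]
    funext z
    rw [Finset.sum_singleton, mdF_of_ge h, mdF_of_ge h]
    simp
  | succ d ih =>
    intro t ht r hr u v hu hv
    by_cases h : t < m
    case neg =>
      have hr0 : ∀ i : Fin m, r i = 0 := fun i => hr i (by omega)
      have hset : Fintype.piFinset (fun i : Fin m => Finset.range (r i + 1))
          = {fun _ => 0} := by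
        ext s
        simp [Fintype.mem_piFinset, funext_iff, Nat.lt_succ_iff, hr0, Nat.le_zero]
      rw [hset, mdF_of_ge h]
      funext z
      rw [Finset.sum_singleton, mdF_of_ge h, mdF_of_ge h]
      simp
    case pos =>
    set T : Fin m := ⟨t, h⟩ with hT
    set r' : Fin m → ℕ := Function.update r T 0 with hr'def
    have hne : ∀ i : Fin m, t + 1 ≤ i.val → i ≠ T := by
      intro i hi e; rw [e] at hi; simp [hT] at hi
    have hr'eq : ∀ i : Fin m, i ≠ T → r' i = r i := by
      intro i hi; simp [hr'def, Function.update_of_ne hi]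
    have hr' : ∀ i : Fin m, i.val < t + 1 → r' i = 0 := by
      intro i hi
      by_cases e : i = T
      · rw [e]; simp [hr'def]
      · have hvi : (i : ℕ) ≠ t := fun hh => e (Fin.ext hh)
        rw [hr'eq i e]; exact hr i (by omega)
    set S' := Fintype.piFinset (fun i : Fin m => Finset.range (r' i + 1)) with hS'
    set F : (Fin m → ℕ) → (Fin m → ℝ) → ℝ := fun s' z =>
      (∏ i, ((r' i).choose (s' i) : ℝ)) *
        (mdF (t+1) s' u z * mdF (t+1) (fun i => r' i - s' i) v z) with hF
    have hFsm : ∀ s' ∈ S', ContDiff ℝ (⊤ : ℕ∞) (F s') :=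
      fun s' _ => contDiff_const.mul ((contDiff_mdF s' hu).mul (contDiff_mdF _ hv))
    have hzeroT : ∀ s' ∈ S', s' T = 0 := by
      intro s' hs'
      have := (Fintype.mem_piFinset.mp hs') T
      simp [hr'def] at this
      exact this
    have hU : ∀ (s' : Fin m → ℕ) (a : ℕ),
        (partialDeriv T)^[a] (mdF (t+1) s' u) = mdF t (Function.update s' T a) u := by
      intro s' a
      rw [mdF_step h (Function.update s' T a) u]
      rw [Function.update_self]
      exact congrArg _ (mdF_congr (fun i hi =>
        (Function.update_of_ne (hne i hi) _ _).symm) u)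
    have hV : ∀ (s' : Fin m → ℕ) (a : ℕ),
        (partialDeriv T)^[r T - a] (mdF (t+1) (fun i => r' i - s' i) v)
          = mdF t (fun i => r i - Function.update s' T a i) v := by
      intro s' a
      rw [mdF_step h (fun i => r i - Function.update s' T a i) v]
      have e1 : r T - Function.update s' T a T = r T - a := by rw [Function.update_self]
      rw [e1]
      refine congrArg _ (mdF_congr (fun i hi => ?_) v)
      rw [hr'eq i (hne i hi), Function.update_of_ne (hne i hi)]
    calc mdF t r (fun z => u z * v z)
        = (partialDeriv T)^[r T] (mdF (t+1) r' (fun z => u z * v z)) := by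
          rw [mdF_step h]
          exact congrArg _ (mdF_congr (fun i hi => (hr'eq i (hne i hi)).symm) _)
      _ = (partialDeriv T)^[r T] (fun z => ∑ s' ∈ S', F s' z) := by
          rw [ih (t+1) (by omega) r' hr' hu hv]
      _ = fun z => ∑ s' ∈ S', (partialDeriv T)^[r T] (F s') z :=
          iter_sum T (r T) S' F hFsm
      _ = fun z => ∑ s' ∈ S', ∑ a ∈ Finset.range (r T + 1),
            ((∏ i, ((r' i).choose (s' i) : ℝ)) * ((r T).choose a : ℝ)) *
              (mdF t (Function.update s' T a) u z *
                mdF t (fun i => r i - Function.update s' T a i) v z) := by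
          funext z
          refine Finset.sum_congr rfl (fun s' hs' => ?_)
          have e1 : (partialDeriv T)^[r T] (F s')
              = fun z => (∏ i, ((r' i).choose (s' i) : ℝ)) *
                  (partialDeriv T)^[r T]
                    (fun z => mdF (t+1) s' u z * mdF (t+1) (fun i => r' i - s' i) v z) z :=
            iter_const_mul T (r T) _ ((contDiff_mdF s' hu).mul (contDiff_mdF _ hv))
          have e2 := iter_mul T (u := mdF (t+1) s' u) (v := mdF (t+1) (fun i => r' i - s' i) v)
            (contDiff_mdF (t := t+1) s' hu) (contDiff_mdF (t := t+1) _ hv) (r T)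
          simp only [e1, e2, Finset.mul_sum]
          refine Finset.sum_congr rfl (fun a ha => ?_)
          rw [hU s' a, hV s' a]
          ring
      _ = fun z => ∑ s ∈ Fintype.piFinset (fun i => Finset.range (r i + 1)),
            (∏ i, ((r i).choose (s i) : ℝ)) *
              (mdF t s u z * mdF t (fun i => r i - s i) v z) := by
          funext z
          rw [← Finset.sum_product']
          refine Finset.sum_nbij' (fun p => Function.update p.1 T p.2)
            (fun s => (Function.update s T 0, s T)) ?_ ?_ ?_ ?_ ?_
          · intro p hp
            rw [Finset.mem_product] at hp
            rw [Fintype.mem_piFinset]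
            intro i
            by_cases e : i = T
            · subst e; simpa [Function.update_self] using hp.2
            · rw [Function.update_of_ne e, ← hr'eq i e]
              exact (Fintype.mem_piFinset.mp hp.1) i
          · intro s hs
            rw [Finset.mem_product]
            constructor
            · show Function.update s T 0 ∈ S'
              rw [hS', Fintype.mem_piFinset]
              intro i
              by_cases e : i = T
              · subst e; simp [hr'def]
              · rw [Function.update_of_ne e, hr'eq i e]
                exact (Fintype.mem_piFinset.mp hs) i
            · show s T ∈ Finset.range (r T + 1)
              have := (Fintype.mem_piFinset.mp hs) T
              simpa using this
          · intro p hp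
            rw [Finset.mem_product] at hp
            have hp0 : p.1 T = 0 := by
              have := (Fintype.mem_piFinset.mp hp.1) T
              simp [hr'def] at this
              exact this
            ext1
            · funext i
              by_cases e : i = T
              · subst e; simp [hp0]
              · simp [Function.update_of_ne e]
            · simp
          · intro s hs
            dsimp only
            funext i
            by_cases e : i = T
            · subst e; simp
            · simp [Function.update_of_ne e]
          · intro p hp
            rw [Finset.mem_product] at hp
            have hp0 : p.1 T = 0 := by
              have := (Fintype.mem_piFinset.mp hp.1) T
              simp [hr'def] at this
              exact this
            have hcoef : (∏ i, ((r i).choose (Function.update p.1 T p.2 i) : ℝ))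
                = (∏ i, ((r' i).choose (p.1 i) : ℝ)) * ((r T).choose p.2 : ℝ) := by
              rw [Fintype.prod_eq_mul_prod_compl T
                (fun i => ((r i).choose (Function.update p.1 T p.2 i) : ℝ)),
                Fintype.prod_eq_mul_prod_compl T (fun i => ((r' i).choose (p.1 i) : ℝ))]
              have h1 : ((r' T).choose (p.1 T) : ℝ) = 1 := by
                simp [hr'def, hp0]
              rw [h1, Function.update_self, one_mul]
              rw [Finset.prod_congr rfl (fun i hi => ?_)]
              · ring
              · have e : i ≠ T := by simpa using hi
                rw [Function.update_of_ne e, hr'eq i e]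
            rw [hcoef]

lemma sqrt_prod {ι : Type*} (S : Finset ι) (c : ι → ℝ) (hc : ∀ i ∈ S, 0 ≤ c i) :
    Real.sqrt (∏ i ∈ S, c i) = ∏ i ∈ S, Real.sqrt (c i) := by
  induction S using Finset.cons_induction with
  | empty => simp
  | cons a s ha ih =>
    rw [Finset.prod_cons, Finset.prod_cons,
      Real.sqrt_mul (hc a (Finset.mem_cons_self a s)),
      ih (fun i hi => hc i (Finset.mem_cons_of_mem hi))]

lemma choose_sqrt (n a : ℕ) (h : a ≤ n) :
    (n.choose a : ℝ) * (Real.sqrt (a.factorial : ℝ) * Real.sqrt (((n-a).factorial : ℝ)))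
      ≤ Real.sqrt (n.factorial : ℝ) * (n.choose a : ℝ) := by
  have hC : (1 : ℝ) ≤ (n.choose a : ℝ) := by
    exact_mod_cast Nat.one_le_iff_ne_zero.mpr (Nat.choose_pos h).ne'
  have hnat : (n.choose a : ℝ) * ((a.factorial : ℝ) * ((n-a).factorial : ℝ))
      = (n.factorial : ℝ) := by
    exact_mod_cast congrArg (Nat.cast : ℕ → ℝ)
      (by rw [← mul_assoc]; exact Nat.choose_mul_factorial_mul_factorial h)
  have hfacts : Real.sqrt ((n.factorial : ℝ))
      = Real.sqrt (n.choose a : ℝ) * (Real.sqrt (a.factorial : ℝ) * Real.sqrt ((n-a).factorial : ℝ)) := by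
    rw [← hnat, Real.sqrt_mul (by positivity), Real.sqrt_mul (by positivity)]
  have key : (n.choose a : ℝ) * (Real.sqrt (a.factorial : ℝ) * Real.sqrt ((n-a).factorial : ℝ))
      = Real.sqrt (n.choose a : ℝ) * Real.sqrt (n.factorial : ℝ) := by
    rw [hfacts]
    have h2 : Real.sqrt (n.choose a : ℝ) * Real.sqrt (n.choose a : ℝ) = (n.choose a : ℝ) :=
      Real.mul_self_sqrt (by positivity)
    linear_combination (-(Real.sqrt (a.factorial : ℝ) * Real.sqrt ((n-a).factorial : ℝ))) * h2
  rw [key, mul_comm]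
  refine mul_le_mul_of_nonneg_left ?_ (Real.sqrt_nonneg _)
  calc Real.sqrt (n.choose a : ℝ) ≤ Real.sqrt ((n.choose a : ℝ) * (n.choose a : ℝ)) := by
        apply Real.sqrt_le_sqrt; nlinarith
    _ = (n.choose a : ℝ) := Real.sqrt_mul_self (by positivity)

lemma perterm {m : ℕ} (r s : Fin m → ℕ) (hs : ∀ i, s i ≤ r i) (Bu Bv : ℝ)
    (hBu : 0 ≤ Bu) (hBv : 0 ≤ Bv) (X Y : ℝ)
    (hX : |X| ≤ Real.sqrt (∏ i, ((s i).factorial : ℝ)) * Bu ^ (∑ i, s i))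
    (hY : |Y| ≤ Real.sqrt (∏ i, (((r i - s i)).factorial : ℝ)) * Bv ^ (∑ i, (r i - s i))) :
    |(∏ i, ((r i).choose (s i) : ℝ)) * (X * Y)|
      ≤ Real.sqrt (∏ i, ((r i).factorial : ℝ)) *
          ∏ i, (((r i).choose (s i) : ℝ) * (Bu ^ (s i) * Bv ^ (r i - s i))) := by
  have hCpos : (0:ℝ) ≤ ∏ i, ((r i).choose (s i) : ℝ) := by positivity
  rw [abs_mul, abs_mul, abs_of_nonneg hCpos]
  calc (∏ i, ((r i).choose (s i) : ℝ)) * (|X| * |Y|)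
      ≤ (∏ i, ((r i).choose (s i) : ℝ)) *
          ((Real.sqrt (∏ i, ((s i).factorial : ℝ)) * Bu ^ (∑ i, s i)) *
            (Real.sqrt (∏ i, (((r i - s i)).factorial : ℝ)) * Bv ^ (∑ i, (r i - s i)))) := by
        refine mul_le_mul_of_nonneg_left ?_ hCpos
        exact mul_le_mul hX hY (abs_nonneg _) (by positivity)
    _ = ∏ i, ((((r i).choose (s i) : ℝ) *
            (Real.sqrt ((s i).factorial : ℝ) * Real.sqrt (((r i - s i)).factorial : ℝ))) *
              (Bu ^ (s i) * Bv ^ (r i - s i))) := by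
        rw [sqrt_prod Finset.univ _ (fun i _ => by positivity),
          sqrt_prod Finset.univ _ (fun i _ => by positivity),
          ← Finset.prod_pow_eq_pow_sum, ← Finset.prod_pow_eq_pow_sum,
          ← Finset.prod_mul_distrib, ← Finset.prod_mul_distrib,
          ← Finset.prod_mul_distrib, ← Finset.prod_mul_distrib]
        exact Finset.prod_congr rfl (fun i _ => by ring)
    _ ≤ ∏ i, (Real.sqrt ((r i).factorial : ℝ) *
            (((r i).choose (s i) : ℝ) * (Bu ^ (s i) * Bv ^ (r i - s i)))) := by
        refine Finset.prod_le_prod (fun i _ => by positivity) (fun i _ => ?_)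
        have h1 := mul_le_mul_of_nonneg_right (choose_sqrt (r i) (s i) (hs i))
          (show (0:ℝ) ≤ Bu ^ (s i) * Bv ^ (r i - s i) by positivity)
        calc (((r i).choose (s i) : ℝ) *
              (Real.sqrt ((s i).factorial : ℝ) * Real.sqrt (((r i - s i)).factorial : ℝ))) *
                (Bu ^ (s i) * Bv ^ (r i - s i))
            ≤ (Real.sqrt ((r i).factorial : ℝ) * ((r i).choose (s i) : ℝ)) *
                (Bu ^ (s i) * Bv ^ (r i - s i)) := h1
          _ = Real.sqrt ((r i).factorial : ℝ) *
                (((r i).choose (s i) : ℝ) * (Bu ^ (s i) * Bv ^ (r i - s i))) := by ring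
    _ = Real.sqrt (∏ i, ((r i).factorial : ℝ)) *
          ∏ i, (((r i).choose (s i) : ℝ) * (Bu ^ (s i) * Bv ^ (r i - s i))) := by
        rw [Finset.prod_mul_distrib, sqrt_prod Finset.univ _ (fun i _ => by positivity)]

lemma sum_eval {m : ℕ} (r : Fin m → ℕ) (Bu Bv : ℝ) :
    ∑ s ∈ Fintype.piFinset (fun i : Fin m => Finset.range (r i + 1)),
      ∏ i, (((r i).choose (s i) : ℝ) * (Bu ^ (s i) * Bv ^ (r i - s i)))
    = (Bu + Bv) ^ (∑ i, r i) := by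
  calc ∑ s ∈ Fintype.piFinset (fun i : Fin m => Finset.range (r i + 1)),
        ∏ i, (((r i).choose (s i) : ℝ) * (Bu ^ (s i) * Bv ^ (r i - s i)))
      = ∏ i, ∑ a ∈ Finset.range (r i + 1), (((r i).choose a : ℝ) * (Bu ^ a * Bv ^ (r i - a))) :=
        (Finset.prod_univ_sum (fun i : Fin m => Finset.range (r i + 1))
          (fun i a => (((r i).choose a : ℝ) * (Bu ^ a * Bv ^ (r i - a))))).symm
    _ = ∏ i, (Bu + Bv) ^ (r i) := by
        refine Finset.prod_congr rfl (fun i _ => ?_)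
        rw [add_pow]
        exact Finset.sum_congr rfl (fun a _ => by ring)
    _ = (Bu + Bv) ^ (∑ i, r i) := Finset.prod_pow_eq_pow_sum _ _ _

lemma prod_bound {u v : (Fin m → ℝ) → ℝ} (hu : ContDiff ℝ (⊤ : ℕ∞) u) (hv : ContDiff ℝ (⊤ : ℕ∞) v)
    (Bu Bv : ℝ) (hBu : 0 ≤ Bu) (hBv : 0 ≤ Bv)
    (hub : ∀ (r : Fin m → ℕ) (z : Fin m → ℝ),
      |mdF 0 r u z| ≤ Real.sqrt (∏ i, ((r i).factorial : ℝ)) * Bu ^ (∑ i, r i))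
    (hvb : ∀ (r : Fin m → ℕ) (z : Fin m → ℝ),
      |mdF 0 r v z| ≤ Real.sqrt (∏ i, ((r i).factorial : ℝ)) * Bv ^ (∑ i, r i))
    (r : Fin m → ℕ) (z : Fin m → ℝ) :
    |mdF 0 r (fun z => u z * v z) z|
      ≤ Real.sqrt (∏ i, ((r i).factorial : ℝ)) * (Bu + Bv) ^ (∑ i, r i) := by
  have hL := congrFun (mdF_mul_aux (m := m) m 0 (by omega) r
    (fun i hi => absurd hi (Nat.not_lt_zero _)) hu hv) z
  rw [hL]
  calc |∑ s ∈ Fintype.piFinset (fun i => Finset.range (r i + 1)),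
        (∏ i, ((r i).choose (s i) : ℝ)) * (mdF 0 s u z * mdF 0 (fun i => r i - s i) v z)|
      ≤ ∑ s ∈ Fintype.piFinset (fun i => Finset.range (r i + 1)),
        |(∏ i, ((r i).choose (s i) : ℝ)) * (mdF 0 s u z * mdF 0 (fun i => r i - s i) v z)| :=
        Finset.abs_sum_le_sum_abs _ _
    _ ≤ ∑ s ∈ Fintype.piFinset (fun i => Finset.range (r i + 1)),
        Real.sqrt (∏ i, ((r i).factorial : ℝ)) *
          ∏ i, (((r i).choose (s i) : ℝ) * (Bu ^ (s i) * Bv ^ (r i - s i))) := by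
        refine Finset.sum_le_sum (fun s hsm => ?_)
        have hs : ∀ i, s i ≤ r i := fun i =>
          Nat.lt_succ_iff.mp (by simpa using (Fintype.mem_piFinset.mp hsm) i)
        exact perterm r s hs Bu Bv hBu hBv _ _ (hub s z) (hvb (fun i => r i - s i) z)
    _ = Real.sqrt (∏ i, ((r i).factorial : ℝ)) *
        ∑ s ∈ Fintype.piFinset (fun i => Finset.range (r i + 1)),
          ∏ i, (((r i).choose (s i) : ℝ) * (Bu ^ (s i) * Bv ^ (r i - s i))) :=
        (Finset.mul_sum _ _ _).symm
    _ = Real.sqrt (∏ i, ((r i).factorial : ℝ)) * (Bu + Bv) ^ (∑ i, r i) := by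
        rw [sum_eval]

end TaylorAux

/-- if `f : ℝ^m → ℝ` is infinitely differentiable with
`‖D^r f‖_∞ ≤ √(r!) B^{|r|₁}` for every multi-index `r`, then for every `k ≥ 1` and every
multi-index `j`, the Taylor coefficient `a_{j,k} = D^j(f^k)(0)` satisfies
`|a_{j,k}| ≤ √(j!) (kB)^{|j|₁}`. -/
theorem taylor_coefficient_power_bound {m : ℕ} (B : ℝ) (hB : 0 < B)
    (f : (Fin m → ℝ) → ℝ) (hf : ContDiff ℝ (⊤ : ℕ∞) f)
    (hbound : ∀ (r : Fin m → ℕ) (z : Fin m → ℝ),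
      |multiDeriv r f z| ≤ Real.sqrt (∏ i, (Nat.factorial (r i) : ℝ)) * B ^ (∑ i, r i))
    (k : ℕ) (hk : 1 ≤ k) (j : Fin m → ℕ) :
    |multiDeriv j (fun z => f z ^ k) 0| ≤
      Real.sqrt (∏ i, (Nat.factorial (j i) : ℝ)) * ((k : ℝ) * B) ^ (∑ i, j i) := by
  have hbound' : ∀ (r : Fin m → ℕ) (z : Fin m → ℝ),
      |TaylorAux.mdF 0 r f z| ≤ Real.sqrt (∏ i, ((r i).factorial : ℝ)) * B ^ (∑ i, r i) := by
    intro r z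
    rw [← TaylorAux.multiDeriv_eq_mdF]
    exact hbound r z
  have main : ∀ k : ℕ, 1 ≤ k → ContDiff ℝ (⊤ : ℕ∞) (fun z => f z ^ k) ∧
      ∀ (r : Fin m → ℕ) (z : Fin m → ℝ), |TaylorAux.mdF 0 r (fun z => f z ^ k) z|
        ≤ Real.sqrt (∏ i, ((r i).factorial : ℝ)) * ((k : ℝ) * B) ^ (∑ i, r i) := by
    intro k hk
    induction k, hk using Nat.le_induction with
    | base =>
      have h1 : (fun z => f z ^ 1) = f := by funext z; rw [pow_one]
      rw [h1]
      exact ⟨hf, fun r z => by simpa using hbound' r z⟩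
    | succ k hk ih =>
      have hpow : (fun z => f z ^ (k+1)) = fun z => f z * f z ^ k := by
        funext z; rw [pow_succ']
      rw [hpow]
      refine ⟨hf.mul ih.1, fun r z => ?_⟩
      have h2 := TaylorAux.prod_bound hf ih.1 B ((k : ℝ) * B) hB.le
        (by positivity) hbound' ih.2 r z
      have e : ((k + 1 : ℕ) : ℝ) * B = B + (k : ℝ) * B := by push_cast; ring
      rw [e]
      exact h2
  have hmain := (main k hk).2 j 0
  rw [TaylorAux.multiDeriv_eq_mdF]
  exact hmain
end

section
/- Let γ > 0, r ∈ ℕ₀, and t ∈ ℝ. Denote by g_t(s) the function s ↦ e^{−2γ^{−2}(t−s)²} and by d^r/dt^r its r-th derivative in t. Then ∫_ℝ |(d^r/dt^r) e^{−2γ^{−2}(t−s)²}|² ds ≤ √π · 2^{2r − 1/2} · r! · γ^{1 − 2r}. -/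
/-!
With `φ(y) = exp (-y²/2)` and `b = 2/γ`, the bump is `s ↦ φ (b (t - s))`, so its `r`-th
`t`-derivative is `b ^ r φ⁽ʳ⁾ (b (t - s))` and the substitution `x = b (t - s)` turns the integral
into `b ^ (2r - 1) ∫ (φ⁽ʳ⁾)²`. Since `φ⁽ʳ⁾ = (-1)ʳ Heᵣ φ` and `φ² ≤ φ`, this is at most
`b ^ (2r - 1) ∫ Heᵣ² φ = b ^ (2r - 1) r! √(2π)`; the last identity follows from `r` integrations by
parts, using `Heₙ₊₁ φ = -(Heₙ φ)'`.
-/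

open Polynomial MeasureTheory Real Nat

section

variable {R : Type*} [CommRing R] [Algebra R ℝ]

theorem integrable_aeval_mul_exp_neg_mul_sq (P : R[X]) {b : ℝ} (hb : 0 < b) :
    Integrable fun x : ℝ => aeval x P * exp (-b * x ^ 2) := by
  induction P using Polynomial.induction_on' with
  | add p q hp hq => simpa only [map_add, add_mul] using hp.fun_add hq
  | monomial n a =>
    have hpow : Integrable fun x : ℝ => x ^ n * exp (-b * x ^ 2) := by
      simpa only [rpow_natCast] using
        integrable_rpow_mul_exp_neg_mul_sq hb (s := n) (by linarith [n.cast_nonneg (α := ℝ)])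
    simpa only [aeval_monomial, mul_assoc] using hpow.const_mul (algebraMap R ℝ a)

theorem integrable_aeval_mul_gaussian (P : R[X]) :
    Integrable fun x : ℝ => aeval x P * exp (-(x ^ 2 / 2)) := by
  simpa only [neg_mul, one_div_mul_eq_div] using
    integrable_aeval_mul_exp_neg_mul_sq P (b := 1 / 2) one_half_pos

theorem hasDerivAt_aeval_mul_gaussian (Q : R[X]) (x : ℝ) :
    HasDerivAt (fun y => aeval y Q * exp (-(y ^ 2 / 2)))
      (-(aeval x (X * Q - derivative Q) * exp (-(x ^ 2 / 2)))) x := by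
  have hexp : HasDerivAt (fun y : ℝ => exp (-(y ^ 2 / 2))) (-x * exp (-(x ^ 2 / 2))) x := by
    simpa [mul_comm] using (((hasDerivAt_pow 2 x).div_const 2).neg).exp
  refine ((Q.hasDerivAt_aeval x).fun_mul hexp).congr_deriv ?_
  simp only [map_sub, map_mul, aeval_X]
  ring

theorem integral_aeval_mul_gaussian_by_parts (P Q : R[X]) :
    ∫ x : ℝ, aeval x P * (aeval x (X * Q - derivative Q) * exp (-(x ^ 2 / 2))) =
      ∫ x : ℝ, aeval x (derivative P) * (aeval x Q * exp (-(x ^ 2 / 2))) := by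
  have ibp := integral_mul_deriv_eq_deriv_mul_of_integrable (u := fun x => aeval x P)
    (fun x _ => P.hasDerivAt_aeval x) (fun x _ => hasDerivAt_aeval_mul_gaussian Q x)
    ?_ ?_ ?_
  · simpa only [mul_neg, integral_neg, neg_inj] using ibp
  · have h := (integrable_aeval_mul_gaussian (P * (X * Q - derivative Q))).fun_neg
    simpa only [Pi.mul_def, mul_neg, map_mul, mul_assoc] using h
  · simpa only [Pi.mul_def, map_mul, mul_assoc] using
      integrable_aeval_mul_gaussian (derivative P * Q)
  · simpa only [Pi.mul_def, map_mul, mul_assoc] using integrable_aeval_mul_gaussian (P * Q)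

end

theorem integral_aeval_mul_hermite_mul_gaussian (n : ℕ) (P : ℤ[X]) :
    ∫ x : ℝ, aeval x P * (aeval x (hermite n) * exp (-(x ^ 2 / 2))) =
      ∫ x : ℝ, aeval x (derivative^[n] P) * exp (-(x ^ 2 / 2)) := by
  induction n generalizing P with
  | zero => simp
  | succ n ih =>
    rw [hermite_succ, integral_aeval_mul_gaussian_by_parts, ih, Function.iterate_succ_apply]

theorem iterate_derivative_hermite_self (n : ℕ) : derivative^[n] (hermite n) = C (n ! : ℤ) := by
  have hdeg : (derivative^[n] (hermite n)).natDegree = 0 :=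
    Nat.le_zero.mp ((natDegree_iterate_derivative _ n).trans_eq (by simp [natDegree_hermite]))
  rw [eq_C_of_natDegree_eq_zero hdeg, coeff_iterate_derivative]
  simp [coeff_hermite_self, Nat.descFactorial_self]

theorem integral_hermite_sq_mul_gaussian (n : ℕ) :
    ∫ x : ℝ, aeval x (hermite n) ^ 2 * exp (-(x ^ 2 / 2)) = n ! * √(2 * π) := by
  have hgauss : ∫ x : ℝ, exp (-(x ^ 2 / 2)) = √(2 * π) := by
    simpa only [neg_mul, one_div_mul_eq_div, one_div, div_inv_eq_mul, mul_comm π,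
      inv_mul_eq_div] using integral_gaussian (1 / 2)
  simp_rw [pow_two (aeval _ _), mul_assoc, integral_aeval_mul_hermite_mul_gaussian,
    iterate_derivative_hermite_self, aeval_C, algebraMap_int_eq, eq_intCast, Int.cast_natCast,
    integral_const_mul, hgauss]

theorem integral_sq_iteratedDeriv_gaussian_le (n : ℕ) :
    ∫ x : ℝ, iteratedDeriv n (fun y => exp (-(y ^ 2 / 2))) x ^ 2 ≤ n ! * √(2 * π) := by
  rw [← integral_hermite_sq_mul_gaussian]
  refine integral_mono_of_nonneg (.of_forall fun x => sq_nonneg _)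
    (integrable_aeval_mul_gaussian (hermite n ^ 2) |>.congr (.of_forall fun x => by simp)) ?_
  refine .of_forall fun x => ?_
  have hexp_le_one : exp (-(x ^ 2 / 2)) ≤ 1 := exp_le_one_iff.mpr (by nlinarith [sq_nonneg x])
  calc iteratedDeriv n (fun y => exp (-(y ^ 2 / 2))) x ^ 2
      = aeval x (hermite n) ^ 2 * exp (-(x ^ 2 / 2)) * exp (-(x ^ 2 / 2)) := by
        rw [iteratedDeriv_eq_iterate, deriv_gaussian_eq_hermite_mul_gaussian, mul_pow, mul_pow,
          ← pow_mul, pow_mul', neg_one_sq, one_pow, one_mul, sq (exp _), mul_assoc]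
    _ ≤ aeval x (hermite n) ^ 2 * exp (-(x ^ 2 / 2)) :=
        mul_le_of_le_one_right (by positivity) hexp_le_one

theorem integral_sq_iteratedDeriv_comp_mul_sub {n : ℕ} {f : ℝ → ℝ} (hf : ContDiff ℝ n f)
    (b t : ℝ) :
    ∫ s : ℝ, iteratedDeriv n (fun t' => f (b * (t' - s))) t ^ 2 =
      b ^ (2 * n) * |b⁻¹| * ∫ x : ℝ, iteratedDeriv n f x ^ 2 := by
  have hderiv (s : ℝ) : iteratedDeriv n (fun t' => f (b * (t' - s))) t =
      b ^ n * iteratedDeriv n f (b * (t - s)) := by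
    rw [iteratedDeriv_comp_sub_const (f := fun u => f (b * u)), iteratedDeriv_comp_const_mul hf]
  simp_rw [hderiv, mul_pow, ← pow_mul, mul_comm n 2, integral_const_mul, mul_assoc]
  rw [integral_sub_left_eq_self (fun u => iteratedDeriv n f (b * u) ^ 2),
    Measure.integral_comp_mul_left (fun u => iteratedDeriv n f u ^ 2), smul_eq_mul]

/-- for `γ > 0`, `r ∈ ℕ₀` and `t ∈ ℝ`,
`∫_ℝ |(d^r/dt^r) e^{-2γ^{-2}(t-s)²}|² ds ≤ √π · 2^{2r - 1/2} · r! · γ^{1 - 2r}`. -/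
theorem gaussian_derivative_L2_bound (γ : ℝ) (hγ : 0 < γ) (r : ℕ) (t : ℝ) :
    (∫ s : ℝ, |iteratedDeriv r (fun t' => Real.exp (-2 / γ ^ 2 * (t' - s) ^ 2)) t| ^ 2) ≤
      Real.sqrt Real.pi * (2 : ℝ) ^ (2 * (r : ℝ) - 1 / 2) * (Nat.factorial r : ℝ) *
        γ ^ (1 - 2 * (r : ℝ)) := by
  set b := 2 / γ with hb
  have hbump (s : ℝ) : (fun t' => exp (-2 / γ ^ 2 * (t' - s) ^ 2)) =
      fun t' => (fun y => exp (-(y ^ 2 / 2))) (b * (t' - s)) := by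
    funext t'
    rw [hb]
    congr 1
    field_simp
  have hφ : ContDiff ℝ r fun y : ℝ => exp (-(y ^ 2 / 2)) := by fun_prop
  simp_rw [sq_abs, hbump, integral_sq_iteratedDeriv_comp_mul_sub hφ]
  calc b ^ (2 * r) * |b⁻¹| * ∫ x, iteratedDeriv r (fun y => exp (-(y ^ 2 / 2))) x ^ 2
      ≤ b ^ (2 * r) * |b⁻¹| * (r ! * √(2 * π)) :=
        mul_le_mul_of_nonneg_left (integral_sq_iteratedDeriv_gaussian_le r) (by positivity)
    _ = √π * 2 ^ (2 * (r : ℝ) - 1 / 2) * r ! * γ ^ (1 - 2 * (r : ℝ)) := by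
        have h2r : 2 * (r : ℝ) = (2 * r : ℕ) := by push_cast; ring
        rw [rpow_sub two_pos, rpow_sub hγ, rpow_one, h2r, rpow_natCast, rpow_natCast,
          ← sqrt_eq_rpow, sqrt_mul zero_le_two, abs_of_pos (by positivity), hb, div_pow]
        field_simp
        rw [sq_sqrt zero_le_two]
end

section
/- Let Z₀ and Z₁ be random vectors taking values in [−M, M]^m for some M > 0, with distributions P₀ and P₁ respectively. Then for every multi-index r ∈ ℕ₀^m, |E(Z₀^r) − E(Z₁^r)| ≤ e^{(m−1)|r|₁} · sup over a ∈ ℝ^m with ‖a‖_∞ ≤ 1 of |E((aᵀZ₀)^{|r|₁}) − E((aᵀZ₁)^{|r|₁})|, where Z^r = Z₁^{r₁}⋯Z_m^{r_m} and |r|₁ = r₁ + ⋯ + r_m. -/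
/-!
Write `n = |r|₁` and repeat the coordinate `zᵢ` exactly `rᵢ` times, so that `z^r` is the
product `x₁ ⋯ xₙ` of the resulting `n` variables. The polarization identity
`2ⁿ n! x₁ ⋯ xₙ = ∑_{ε ∈ {±1}ⁿ} ε₁ ⋯ εₙ (ε₁x₁ + ⋯ + εₙxₙ)ⁿ`
then expresses `z^r` as a combination of `2ⁿ` powers `(aᵀz)ⁿ`, where `aᵢ` is the sum of the
signs attached to the copies of `zᵢ`, divided by `n`; so `‖a‖_∞ ≤ 1`, and every coefficient has
absolute value `nⁿ / (2ⁿ n!)`. Integrating against `P₀ - P₁` bounds the moment gap by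
`nⁿ / n! ≤ eⁿ` times the supremum, and `eⁿ ≤ e^{(m-1)n}` once `m ≥ 2`. For `m ≤ 1` the monomial
is itself `(aᵀz)ⁿ` with `a = 1`.
-/

open MeasureTheory Finset

def signOfBool {R : Type*} [One R] [Neg R] (b : Bool) : R := if b then 1 else -1

theorem abs_signOfBool {R : Type*} [Ring R] [LinearOrder R] [IsOrderedRing R] (b : Bool) :
    |(signOfBool b : R)| = 1 := by
  cases b <;> simp [signOfBool]

theorem sum_abs_prod_signOfBool_mul {R : Type*} [CommRing R] [LinearOrder R] [IsStrictOrderedRing R]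
    {κ : Type*} [Fintype κ] [DecidableEq κ] (c : R) :
    ∑ ε : κ → Bool, |(∏ j, (signOfBool (ε j) : R)) * c| = 2 ^ Fintype.card κ * |c| := by
  simp [abs_mul, abs_prod, abs_signOfBool]

section Polarization

variable {R : Type*} [CommRing R] {ι : Type*} [Fintype ι]

theorem eq_one_of_odd_of_sum_eq_card {k : ι → ℕ} (hk : ∀ j, Odd (k j))
    (hsum : ∑ j, k j = Fintype.card ι) : k = 1 := by
  have h : ∑ _j : ι, 1 = ∑ j, k j := by simp [hsum]
  funext j
  exact ((sum_eq_sum_iff_of_le fun j _ => (hk j).pos).1 h j (mem_univ j)).symm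

variable [DecidableEq ι]

theorem sum_signOfBool_pow (e : ℕ) :
    ∑ b : Bool, (signOfBool b : R) ^ e = if Even e then 2 else 0 := by
  rcases Nat.even_or_odd e with he | he
  · simp [signOfBool, he, he.neg_one_pow, one_add_one_eq_two]
  · simp [signOfBool, Nat.not_even_iff_odd.2 he, he.neg_one_pow]

theorem sum_prod_signOfBool_pow (k : ι → ℕ) :
    ∑ ε : ι → Bool, ∏ j, (signOfBool (ε j) : R) ^ k j = ∏ j, if Even (k j) then 2 else 0 := by
  rw [← Fintype.prod_sum (fun j b => (signOfBool b : R) ^ k j)]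
  simp only [sum_signOfBool_pow]

-- Averaging over the signs kills every multinomial term in which some `xⱼ` has even exponent,
-- and the only exponent vector with all entries odd and sum `card ι` is `1`.
theorem sum_prod_signOfBool_mul_sum_pow (x : ι → R) :
    ∑ ε : ι → Bool, (∏ j, (signOfBool (ε j) : R)) *
        (∑ j, signOfBool (ε j) * x j) ^ Fintype.card ι =
      2 ^ Fintype.card ι * (Fintype.card ι).factorial * ∏ j, x j := by
  set n := Fintype.card ι
  calc ∑ ε : ι → Bool, (∏ j, (signOfBool (ε j) : R)) * (∑ j, signOfBool (ε j) * x j) ^ n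
      = ∑ k ∈ piAntidiag univ n, (Nat.multinomial univ k * ∏ j, x j ^ k j) *
          ∑ ε : ι → Bool, ∏ j, (signOfBool (ε j) : R) ^ (k j + 1) := by
        simp_rw [sum_pow_eq_sum_piAntidiag, mul_sum]
        rw [sum_comm]
        refine sum_congr rfl fun k _ => sum_congr rfl fun ε _ => ?_
        simp_rw [pow_succ, mul_pow, prod_mul_distrib]
        ring
    _ = ∑ k ∈ piAntidiag univ n, (Nat.multinomial univ k * ∏ j, x j ^ k j) *
          ∏ j, if Even (k j + 1) then (2 : R) else 0 := by
        simp only [sum_prod_signOfBool_pow]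
    _ = (Nat.multinomial univ (1 : ι → ℕ) * ∏ j, x j) * 2 ^ n := by
        rw [sum_eq_single 1]
        · simp [n]
        · intro k hk hk1
          obtain ⟨j, hj⟩ : ∃ j, ¬ Odd (k j) := by
            by_contra! hodd
            exact hk1 (eq_one_of_odd_of_sum_eq_card hodd (mem_piAntidiag.1 hk).1)
          have hzero : (if Even (k j + 1) then (2 : R) else 0) = 0 := by
            simp [Nat.even_add_one, hj]
          rw [prod_eq_zero (f := fun j => if Even (k j + 1) then (2 : R) else 0) (mem_univ j) hzero,
            mul_zero]
        · simp [mem_piAntidiag, n]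
    _ = 2 ^ n * n.factorial * ∏ j, x j := by
        have := Nat.multinomial_spec (univ : Finset ι) 1
        simp only [Pi.one_apply, Nat.factorial_one, prod_const_one, one_mul, sum_const,
          smul_eq_mul, mul_one, card_univ] at this
        rw [this]
        ring

end Polarization

section Monomial

variable {ι : Type*} [Fintype ι] (r : ι → ℕ)

def signDirection {K : Type*} [DivisionRing K] (ε : (Σ i, Fin (r i)) → Bool) (i : ι) : K :=
  (∑ k : Fin (r i), signOfBool (ε ⟨i, k⟩)) / (∑ i, r i : ℕ)

theorem sum_sigma_signOfBool_mul {K : Type*} [Field K] [CharZero K]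
    (ε : (Σ i, Fin (r i)) → Bool) (z : ι → K) :
    ∑ j : Σ i, Fin (r i), signOfBool (ε j) * z j.1 =
      (∑ i, r i : ℕ) * ∑ i, signDirection r ε i * z i := by
  rw [Fintype.sum_sigma, mul_sum]
  refine sum_congr rfl fun i _ => ?_
  rcases eq_or_ne (∑ i, r i) 0 with hn | hn
  · have hri : r i = 0 := sum_eq_zero_iff.1 hn i (mem_univ i)
    rw [hn, Nat.cast_zero, zero_mul]
    exact sum_eq_zero fun k _ => absurd k.2 (by omega)
  · rw [signDirection, ← mul_assoc, mul_div_cancel₀ _ (Nat.cast_ne_zero.2 hn), sum_mul]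

theorem prod_pow_eq_sum_signDirection [DecidableEq ι] {K : Type*} [Field K] [CharZero K]
    (z : ι → K) :
    ∏ i, z i ^ r i =
      ∑ ε : (Σ i, Fin (r i)) → Bool,
        (∏ j, (signOfBool (ε j) : K)) *
            ((∑ i, r i : ℕ) ^ (∑ i, r i) / (2 ^ (∑ i, r i) * (∑ i, r i).factorial)) *
          (∑ i, signDirection r ε i * z i) ^ (∑ i, r i) := by
  have hpol := sum_prod_signOfBool_mul_sum_pow (fun j : Σ i, Fin (r i) => z j.1)
  have hcard : Fintype.card (Σ i, Fin (r i)) = ∑ i, r i := by simp [Fintype.card_sigma]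
  have hprod : ∏ j : Σ i, Fin (r i), z j.1 = ∏ i, z i ^ r i := by simp [Fintype.prod_sigma]
  simp only [hcard, hprod, sum_sigma_signOfBool_mul, mul_pow] at hpol
  have hfac : ((∑ i, r i).factorial : K) ≠ 0 := Nat.cast_ne_zero.2 (Nat.factorial_ne_zero _)
  rw [← mul_right_inj' (mul_ne_zero (pow_ne_zero _ two_ne_zero) hfac), ← hpol, mul_sum]
  refine sum_congr rfl fun ε _ => ?_
  field_simp

theorem abs_signDirection_le_one {K : Type*} [Field K] [LinearOrder K] [IsStrictOrderedRing K]
    (ε : (Σ i, Fin (r i)) → Bool) (i : ι) : |(signDirection r ε i : K)| ≤ 1 := by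
  rw [signDirection, abs_div, Nat.abs_cast]
  refine div_le_one_of_le₀ ?_ (Nat.cast_nonneg _)
  calc |∑ k : Fin (r i), (signOfBool (ε ⟨i, k⟩) : K)|
      ≤ ∑ k : Fin (r i), |(signOfBool (ε ⟨i, k⟩) : K)| := abs_sum_le_sum_abs _ _
    _ = r i := by simp [abs_signOfBool]
    _ ≤ (∑ i, r i : ℕ) := by
        exact_mod_cast single_le_sum (fun j _ => Nat.zero_le (r j)) (mem_univ i)

end Monomial

theorem abs_integral_sub_integral_sum_mul_le {α κ : Type*} [MeasurableSpace α]
    {μ ν : Measure α} {s : Finset κ} (c : κ → ℝ) {f : κ → α → ℝ}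
    (hμ : ∀ k ∈ s, Integrable (f k) μ) (hν : ∀ k ∈ s, Integrable (f k) ν) {B : ℝ}
    (hB : ∀ k ∈ s, |∫ x, f k x ∂μ - ∫ x, f k x ∂ν| ≤ B) :
    |∫ x, ∑ k ∈ s, c k * f k x ∂μ - ∫ x, ∑ k ∈ s, c k * f k x ∂ν| ≤ (∑ k ∈ s, |c k|) * B := by
  rw [integral_finsetSum _ fun k hk => (hμ k hk).const_mul _,
    integral_finsetSum _ fun k hk => (hν k hk).const_mul _, ← sum_sub_distrib, sum_mul]
  refine (abs_sum_le_sum_abs _ _).trans (sum_le_sum fun k hk => ?_)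
  rw [integral_const_mul, integral_const_mul, ← mul_sub, abs_mul]
  exact mul_le_mul_of_nonneg_left (hB k hk) (abs_nonneg _)

section BoundedSupport

variable {ι : Type*} {M : ℝ}

theorem ae_abs_le_of_measure_compl_box_eq_zero {P : Measure (ι → ℝ)}
    (h : P {z | ∀ i, z i ∈ Set.Icc (-M) M}ᶜ = 0) : ∀ᵐ z ∂P, ∀ i, |z i| ≤ M :=
  (ae_iff.2 h).mono fun _ hz i => abs_le.2 (hz i)

variable [Fintype ι]

theorem abs_sum_mul_le_card_mul {a z : ι → ℝ} (ha : ∀ i, |a i| ≤ 1) (hz : ∀ i, |z i| ≤ M) :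
    |∑ i, a i * z i| ≤ Fintype.card ι * M := by
  calc |∑ i, a i * z i| ≤ ∑ i, |a i * z i| := abs_sum_le_sum_abs _ _
    _ ≤ ∑ _i : ι, M := sum_le_sum fun i _ => by
        rw [abs_mul]
        exact (mul_le_of_le_one_left (abs_nonneg _) (ha i)).trans (hz i)
    _ = Fintype.card ι * M := by simp

variable {P : Measure (ι → ℝ)} {a : ι → ℝ}

theorem ae_norm_sum_mul_pow_le (hP : ∀ᵐ z ∂P, ∀ i, |z i| ≤ M) (ha : ∀ i, |a i| ≤ 1) (n : ℕ) :
    ∀ᵐ z ∂P, ‖(∑ i, a i * z i) ^ n‖ ≤ (Fintype.card ι * M) ^ n :=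
  hP.mono fun z hz => by
    rw [Real.norm_eq_abs, abs_pow]
    exact pow_le_pow_left₀ (abs_nonneg _) (abs_sum_mul_le_card_mul ha hz) n

theorem integrable_sum_mul_pow [IsFiniteMeasure P]
    (hP : ∀ᵐ z ∂P, ∀ i, |z i| ≤ M) (ha : ∀ i, |a i| ≤ 1) (n : ℕ) :
    Integrable (fun z => (∑ i, a i * z i) ^ n) P :=
  .of_bound (Continuous.aestronglyMeasurable (by fun_prop)) _ (ae_norm_sum_mul_pow_le hP ha n)

theorem abs_integral_sum_mul_pow_le [IsProbabilityMeasure P]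
    (hP : ∀ᵐ z ∂P, ∀ i, |z i| ≤ M) (ha : ∀ i, |a i| ≤ 1) (n : ℕ) :
    |∫ z, (∑ i, a i * z i) ^ n ∂P| ≤ (Fintype.card ι * M) ^ n := by
  simpa using norm_integral_le_of_norm_le_const (ae_norm_sum_mul_pow_le hP ha n)

theorem bddAbove_range_abs_integral_sub_integral_sum_mul_pow {P₀ P₁ : Measure (ι → ℝ)}
    [IsProbabilityMeasure P₀] [IsProbabilityMeasure P₁] (hP₀ : ∀ᵐ z ∂P₀, ∀ i, |z i| ≤ M)
    (hP₁ : ∀ᵐ z ∂P₁, ∀ i, |z i| ≤ M) (n : ℕ) :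
    BddAbove (Set.range fun a : {a : ι → ℝ // ∀ i, |a i| ≤ 1} =>
      |∫ z, (∑ i, a.1 i * z i) ^ n ∂P₀ - ∫ z, (∑ i, a.1 i * z i) ^ n ∂P₁|) := by
  refine ⟨2 * (Fintype.card ι * M) ^ n, Set.forall_mem_range.2 fun a => ?_⟩
  have h₀ := abs_integral_sum_mul_pow_le hP₀ a.2 n
  have h₁ := abs_integral_sum_mul_pow_le hP₁ a.2 n
  linarith [abs_sub (∫ z, (∑ i, a.1 i * z i) ^ n ∂P₀) (∫ z, (∑ i, a.1 i * z i) ^ n ∂P₁)]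

end BoundedSupport

theorem prod_pow_eq_sum_pow_of_subsingleton {R ι : Type*} [CommSemiring R] [Fintype ι]
    [Subsingleton ι] (z : ι → R) (r : ι → ℕ) :
    ∏ i, z i ^ r i = (∑ i, z i) ^ ∑ i, r i := by
  cases isEmpty_or_nonempty ι with
  | inl _ => simp
  | inr h =>
    obtain ⟨i⟩ := h
    simp [Fintype.prod_subsingleton _ i, Fintype.sum_subsingleton _ i]

theorem pow_div_factorial_le_exp_pred_mul {m : ℕ} (hm : 2 ≤ m) (n : ℕ) :
    (n : ℝ) ^ n / n.factorial ≤ Real.exp ((m - 1) * n) := by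
  refine (Real.pow_div_factorial_le_exp _ (Nat.cast_nonneg n) n).trans (Real.exp_le_exp.2 ?_)
  have hm' : (2 : ℝ) ≤ m := by exact_mod_cast hm
  exact le_mul_of_one_le_left (Nat.cast_nonneg n) (by linarith)

theorem moment_diff_le_projection_sup_general {m : ℕ} (M : ℝ)
    (P₀ P₁ : Measure (Fin m → ℝ))
    [IsProbabilityMeasure P₀] [IsProbabilityMeasure P₁]
    (h₀ : P₀ {z | ∀ i, z i ∈ Set.Icc (-M) M}ᶜ = 0)
    (h₁ : P₁ {z | ∀ i, z i ∈ Set.Icc (-M) M}ᶜ = 0)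
    (r : Fin m → ℕ) :
    |(∫ z, ∏ i, z i ^ r i ∂P₀) - ∫ z, ∏ i, z i ^ r i ∂P₁| ≤
      Real.exp (((m : ℝ) - 1) * ((∑ i, r i : ℕ) : ℝ)) *
        ⨆ a : {a : Fin m → ℝ // ∀ i, |a i| ≤ 1},
          |(∫ z, (∑ i, a.1 i * z i) ^ (∑ i, r i) ∂P₀) -
            ∫ z, (∑ i, a.1 i * z i) ^ (∑ i, r i) ∂P₁| := by
  have hP₀ := ae_abs_le_of_measure_compl_box_eq_zero h₀
  have hP₁ := ae_abs_le_of_measure_compl_box_eq_zero h₁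
  have hle_sup (a : Fin m → ℝ) (ha : ∀ i, |a i| ≤ 1) :=
    le_ciSup (bddAbove_range_abs_integral_sub_integral_sum_mul_pow hP₀ hP₁ (∑ i, r i)) ⟨a, ha⟩
  have hsup_nonneg := Real.iSup_nonneg fun a : {a : Fin m → ℝ // ∀ i, |a i| ≤ 1} =>
    abs_nonneg ((∫ z, (∑ i, a.1 i * z i) ^ (∑ i, r i) ∂P₀) -
      ∫ z, (∑ i, a.1 i * z i) ^ (∑ i, r i) ∂P₁)
  rcases le_or_gt m 1 with hm | hm
  · have : Subsingleton (Fin m) := Fin.subsingleton_iff_le_one.2 hm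
    have hexp : 1 ≤ Real.exp (((m : ℝ) - 1) * ((∑ i, r i : ℕ) : ℝ)) := by
      interval_cases m <;> simp
    simp only [prod_pow_eq_sum_pow_of_subsingleton]
    have hone := hle_sup 1 (by simp)
    simp only [Pi.one_apply, one_mul] at hone
    exact hone.trans (le_mul_of_one_le_left hsup_nonneg hexp)
  · simp only [prod_pow_eq_sum_signDirection r]
    calc _ ≤ _ := abs_integral_sub_integral_sum_mul_le _
          (fun ε _ => integrable_sum_mul_pow hP₀ (abs_signDirection_le_one r ε) _)
          (fun ε _ => integrable_sum_mul_pow hP₁ (abs_signDirection_le_one r ε) _)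
          (fun ε _ => hle_sup _ (abs_signDirection_le_one r ε))
      _ = ((∑ i, r i : ℕ) : ℝ) ^ (∑ i, r i) / (∑ i, r i).factorial * _ := by
          rw [sum_abs_prod_signOfBool_mul, abs_of_nonneg (by positivity), Fintype.card_sigma]
          simp only [Fintype.card_fin]
          field_simp
      _ ≤ _ := mul_le_mul_of_nonneg_right (pow_div_factorial_le_exp_pred_mul hm _) hsup_nonneg

/-- for random vectors `Z₀ ~ P₀`, `Z₁ ~ P₁` taking values in `[-M,M]^m`,
and any multi-index `r`,
`|E(Z₀^r) - E(Z₁^r)| ≤ e^{(m-1)|r|₁} · sup_{‖a‖_∞ ≤ 1} |E((aᵀZ₀)^{|r|₁}) - E((aᵀZ₁)^{|r|₁})|`. -/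
theorem moment_diff_le_projection_sup {m : ℕ} (M : ℝ) (hM : 0 < M)
    (P₀ P₁ : Measure (Fin m → ℝ))
    [IsProbabilityMeasure P₀] [IsProbabilityMeasure P₁]
    (h₀ : P₀ {z | ∀ i, z i ∈ Set.Icc (-M) M}ᶜ = 0)
    (h₁ : P₁ {z | ∀ i, z i ∈ Set.Icc (-M) M}ᶜ = 0)
    (r : Fin m → ℕ) :
    |(∫ z, ∏ i, z i ^ r i ∂P₀) - ∫ z, ∏ i, z i ^ r i ∂P₁| ≤
      Real.exp (((m : ℝ) - 1) * ((∑ i, r i : ℕ) : ℝ)) *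
        ⨆ a : {a : Fin m → ℝ // ∀ i, |a i| ≤ 1},
          |(∫ z, (∑ i, a.1 i * z i) ^ (∑ i, r i) ∂P₀) -
            ∫ z, (∑ i, a.1 i * z i) ^ (∑ i, r i) ∂P₁| :=
  moment_diff_le_projection_sup_general M P₀ P₁ h₀ h₁ r
end
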